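/- arXiv:2103.07294 — 4 statements merged into one kernel-verified Lean document; each statement's English description precedes it below -/
import Mathlib

section
/- Let B be a nonempty binary tree with left subtree L and right subtree R (either possibly empty). Then the number of non-ambiguous trees of shape B satisfies |NAT(B)| = C(|LV(B)|, |LV_B(R)|) · C(|RV(B)|, |RV_B(L)|) · |NAT(L)| · |NAT(R)|, where C denotes the binomial coefficient, |LV_B(R)| is the number of left children of B lying in R, |RV_B(L)| is the number of right children of B lying in L, and by convention |NAT| of an empty tree equals 1. -/
/-- Binary trees: `leaf` is the empty tree, `node l r` is a vertex with
left subtree `l` and right subtree `r`. -/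
inductive BT : Type
  | leaf : BT
  | node : BT → BT → BT
  deriving DecidableEq

namespace BT

/-- The positions (vertices) of a binary tree, encoded as the lists of directions
(`false` = left, `true` = right) from the root. -/
def positions : BT → Finset (List Bool)
  | leaf => ∅
  | node l r =>
      insert [] ((l.positions.image (List.cons false)) ∪ (r.positions.image (List.cons true)))

/-- Positions of the left children of a binary tree. -/
def leftPos (B : BT) : Finset (List Bool) := B.positions.filter (fun p => p.getLast? = some false)

/-- Positions of the right children of a binary tree. -/
def rightPos (B : BT) : Finset (List Bool) := B.positions.filter (fun p => p.getLast? = some true)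

/-- The subtree rooted at a given position (the empty tree for invalid positions). -/
def subtreeAt : BT → List Bool → BT
  | t, [] => t
  | leaf, _ :: _ => leaf
  | node l r, b :: p => (if b then r else l).subtreeAt p

end BT

/-- A non-ambiguous tree of shape `B`: a labelling of the left (resp. right) children
of `B` by `0, …, |LV(B)|-1` (resp. `0, …, |RV(B)|-1`), bijectively, such that the label
of a strict ancestor is strictly greater than the label of a descendant (among left
children, resp. among right children).  A vertex `p` is a strict ancestor of `q`
exactly when `p` is a proper prefix of `q`. -/
structure NAT (B : BT) where
  labL : {p : List Bool // p ∈ B.leftPos} → Fin B.leftPos.card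
  labR : {p : List Bool // p ∈ B.rightPos} → Fin B.rightPos.card
  bijL : Function.Bijective labL
  bijR : Function.Bijective labR
  ancL : ∀ p q : {p : List Bool // p ∈ B.leftPos}, p.1 <+: q.1 → p.1 ≠ q.1 → labL q < labL p
  ancR : ∀ p q : {p : List Bool // p ∈ B.rightPos}, p.1 <+: q.1 → p.1 ≠ q.1 → labR q < labR p

instance (B : BT) : Finite (NAT B) := by
  have h : Function.Injective (fun T : NAT B => (T.labL, T.labR)) := by
    intro T₁ T₂ h
    cases T₁
    cases T₂
    simp only [Prod.mk.injEq] at h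
    obtain ⟨h1, h2⟩ := h
    subst h1
    subst h2
    rfl
  exact Finite.of_injective _ h

noncomputable instance (B : BT) : Fintype (NAT B) := Fintype.ofFinite _

/-!
A non-ambiguous tree of shape `B` is a pair of labellings, of the left children and of the
right children of `B`, each a bijection onto `{0, …, m-1}` that strictly decreases from ancestor
to descendant, i.e. a reversed linear extension of the ancestor order.  In `node L R` the left
children are those of `R` together with the left children of `L` and the root of `L`, and
vertices of different subtrees are incomparable.  A linear extension of a disjoint union is a
shuffle of linear extensions of the two parts, determined by the set of labels the first part
receives; this gives the binomial factor.  The root of `L` is an ancestor of every other vertex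
of `L`, so it always receives the largest label and does not change the count.
-/

theorem Finset.card_compl_fin {n k : ℕ} {U : Finset (Fin n)} (hU : U.card = k) :
    Uᶜ.card = n - k := by
  rw [Finset.card_compl, Fintype.card_fin, hU]

section Labelling

variable {ι κ : Type*}

def DecreasingLabelling (r : ι → ι → Prop) (n : ℕ) : Type _ :=
  {f : ι → Fin n // f.Bijective ∧ ∀ ⦃p q⦄, r p q → f q < f p}

namespace DecreasingLabelling

def relIsoCongr {r : ι → ι → Prop} {s : κ → κ → Prop} (e : r ≃r s) (n : ℕ) :
    DecreasingLabelling r n ≃ DecreasingLabelling s n where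
  toFun f := ⟨f.1 ∘ e.symm, f.2.1.comp e.symm.bijective,
    fun _ _ h => f.2.2 (e.symm.map_rel_iff.2 h)⟩
  invFun f := ⟨f.1 ∘ e, f.2.1.comp e.bijective, fun _ _ h => f.2.2 (e.map_rel_iff.2 h)⟩
  left_inv f := Subtype.ext (funext fun p => by simp)
  right_inv f := Subtype.ext (funext fun p => by simp)

variable {r : ι → ι → Prop}

theorem apply_eq_last_of_isTop {n : ℕ} (f : DecreasingLabelling r (n + 1)) {t : ι}
    (htop : ∀ q, q ≠ t → r t q) : f.1 t = Fin.last n := by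
  obtain ⟨q, hq⟩ := f.2.1.2 (Fin.last n)
  by_cases hqt : q = t
  · rwa [← hqt]
  · exact absurd (hq ▸ f.2.2 (htop q hqt)) (Fin.le_last _).not_gt

noncomputable def extendTop (t : ι) (hbot : ∀ q, ¬ r q t) {n : ℕ}
    (g : DecreasingLabelling (fun p q : {q // q ≠ t} => r p q) n) :
    DecreasingLabelling r (n + 1) := by
  classical
  refine ⟨fun q => if h : q = t then Fin.last n else (g.1 ⟨q, h⟩).castSucc, ⟨?_, ?_⟩, ?_⟩
  · intro p q hpq
    by_cases hp : p = t <;> by_cases hq : q = t <;>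
      simp only [hp, hq, dite_true, dite_false] at hpq
    · exact hp.trans hq.symm
    · exact absurd hpq.symm (Fin.castSucc_ne_last _)
    · exact absurd hpq (Fin.castSucc_ne_last _)
    · exact congrArg Subtype.val (g.2.1.1 (Fin.castSucc_injective _ hpq))
  · refine Fin.lastCases ⟨t, dif_pos rfl⟩ (fun i => ?_)
    obtain ⟨q, rfl⟩ := g.2.1.2 i
    exact ⟨q, by simp [q.2]⟩
  · intro p q hpq
    have hq : q ≠ t := fun h => hbot p (h ▸ hpq)
    by_cases hp : p = t
    · simp [hp, hq]
    · simpa [hp, hq] using g.2.2 (p := ⟨p, hp⟩) (q := ⟨q, hq⟩) hpq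

theorem card_succ_of_isTop (t : ι) (htop : ∀ q, q ≠ t → r t q) (hbot : ∀ q, ¬ r q t)
    (n : ℕ) :
    Nat.card (DecreasingLabelling r (n + 1)) =
      Nat.card (DecreasingLabelling (fun p q : {q // q ≠ t} => r p q) n) := by
  classical
  refine (Nat.card_eq_of_bijective (extendTop t hbot) ⟨fun g g' h => ?_, fun f => ?_⟩).symm
  · refine Subtype.ext (funext fun q => Fin.castSucc_injective _ ?_)
    simpa [extendTop, q.2] using congrFun (congrArg Subtype.val h) q.1
  · have hlt (q : {q // q ≠ t}) : f.1 q ≠ Fin.last n := Fin.ne_last_of_lt (f.2.2 (htop q q.2))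
    refine ⟨⟨fun q => (f.1 q).castPred (hlt q), ⟨fun p q hpq => ?_, fun i => ?_⟩, ?_⟩, ?_⟩
    · exact Subtype.ext (f.2.1.1 (Fin.castPred_inj.1 hpq))
    · obtain ⟨q, hq⟩ := f.2.1.2 i.castSucc
      have hqt : q ≠ t := by
        rintro rfl
        exact Fin.castSucc_ne_last i (hq.symm.trans (apply_eq_last_of_isTop f htop))
      exact ⟨⟨q, hqt⟩, by simp [hq]⟩
    · exact fun p q hpq => Fin.castPred_lt_castPred_iff.2 (f.2.2 hpq)
    · refine Subtype.ext (funext fun q => ?_)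
      by_cases hq : q = t
      · subst hq
        simp [extendTop, apply_eq_last_of_isTop f htop]
      · simp [extendTop, hq]

variable {s : κ → κ → Prop}

theorem exists_orderEmbOfFin_comp_eq {n k : ℕ} {f : ι → Fin n} (hf : f.Injective)
    (hdec : ∀ ⦃p q⦄, r p q → f q < f p) (U : Finset (Fin n)) (hU : U.card = k)
    (hrange : Set.range f = U) :
    ∃ g : DecreasingLabelling r k, ∀ x, U.orderEmbOfFin hU (g.1 x) = f x := by
  have hfU (x : ι) : f x ∈ U := by simp [← Finset.mem_coe, ← hrange]
  let e := U.orderIsoOfFin hU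
  refine ⟨⟨fun x => e.symm ⟨f x, hfU x⟩, ⟨fun x y hxy => hf ?_, fun i => ?_⟩, fun p q h => ?_⟩,
    fun x => ?_⟩
  · simpa using e.symm.injective hxy
  · obtain ⟨x, hx⟩ : (e i : Fin n) ∈ Set.range f := hrange ▸ (e i).2
    exact ⟨x, by simp [hx]⟩
  · exact e.symm.lt_iff_lt.2 (Subtype.mk_lt_mk.2 (hdec h))
  · rw [← Finset.coe_orderIsoOfFin_apply, OrderIso.apply_symm_apply]

def shuffle {n k : ℕ} (U : {U : Finset (Fin n) // U.card = k}) (g : DecreasingLabelling r k)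
    (h : DecreasingLabelling s (n - k)) : DecreasingLabelling (Sum.LiftRel r s) n := by
  let e₁ := U.1.orderEmbOfFin U.2
  let e₂ := U.1ᶜ.orderEmbOfFin (Finset.card_compl_fin U.2)
  refine ⟨Sum.elim (e₁ ∘ g.1) (e₂ ∘ h.1), ⟨?_, fun i => ?_⟩, ?_⟩
  · refine (e₁.injective.comp g.2.1.1).sumElim (e₂.injective.comp h.2.1.1) fun x y hxy => ?_
    have h₁ : e₁ (g.1 x) ∈ U.1 := U.1.orderEmbOfFin_mem U.2 _
    have h₂ : e₂ (h.1 y) ∈ U.1ᶜ := U.1ᶜ.orderEmbOfFin_mem _ _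
    exact Finset.mem_compl.1 h₂ (by rwa [← show e₁ (g.1 x) = e₂ (h.1 y) from hxy])
  · by_cases hi : i ∈ U.1
    · obtain ⟨j, hj⟩ : i ∈ Set.range e₁ := by simpa [e₁, Finset.range_orderEmbOfFin]
      obtain ⟨x, rfl⟩ := g.2.1.2 j
      exact ⟨.inl x, hj⟩
    · obtain ⟨j, hj⟩ : i ∈ Set.range e₂ := by simpa [e₂, Finset.range_orderEmbOfFin]
      obtain ⟨y, rfl⟩ := h.2.1.2 j
      exact ⟨.inr y, hj⟩
  · rintro _ _ (⟨hr⟩ | ⟨hs⟩)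
    · exact e₁.strictMono (g.2.2 hr)
    · exact e₂.strictMono (h.2.2 hs)

theorem range_shuffle_inl {n k : ℕ} (U : {U : Finset (Fin n) // U.card = k})
    (g : DecreasingLabelling r k) (h : DecreasingLabelling s (n - k)) :
    Set.range (fun x => (shuffle U g h).1 (.inl x)) = U.1 :=
  (g.2.1.2.range_comp _).trans (Finset.range_orderEmbOfFin _ _)

theorem card_sum [Fintype ι] (n : ℕ) :
    Nat.card (DecreasingLabelling (Sum.LiftRel r s) n) =
      n.choose (Fintype.card ι) * Nat.card (DecreasingLabelling r (Fintype.card ι)) *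
        Nat.card (DecreasingLabelling s (n - Fintype.card ι)) := by
  classical
  set k := Fintype.card ι
  have hchoose : Nat.card {U : Finset (Fin n) // U.card = k} = n.choose k := by
    rw [Nat.card_eq_fintype_card, Fintype.card_finset_len, Fintype.card_fin]
  rw [← hchoose, mul_assoc, ← Nat.card_prod, ← Nat.card_prod]
  refine (Nat.card_eq_of_bijective (fun x => shuffle x.1 x.2.1 x.2.2) ⟨?_, fun f => ?_⟩).symm
  · rintro ⟨U, g, h⟩ ⟨U', g', h'⟩ hf
    obtain rfl : U = U' := Subtype.ext <| Finset.coe_inj.1 <| by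
      rw [← range_shuffle_inl U g h, ← range_shuffle_inl U' g' h']
      simp only at hf
      rw [hf]
    have hf' := congrArg Subtype.val hf
    obtain rfl : g = g' := Subtype.ext <| funext fun x =>
      (U.1.orderEmbOfFin U.2).injective (congrFun hf' (.inl x))
    obtain rfl : h = h' := Subtype.ext <| funext fun y =>
      (U.1ᶜ.orderEmbOfFin (Finset.card_compl_fin U.2)).injective (congrFun hf' (.inr y))
    rfl
  · let U := Finset.univ.image (f.1 ∘ .inl)
    have hU : U.card = k := Finset.card_image_of_injective _ (f.2.1.1.comp Sum.inl_injective)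
    have hrange : Set.range (f.1 ∘ .inl) = U := by simp [U, Function.comp_def]
    have hrange' : Set.range (f.1 ∘ .inr) = ↑Uᶜ := by
      rw [Finset.coe_compl, ← hrange, Set.range_comp, Set.range_comp, ← Set.compl_range_inl,
        Set.image_compl_eq f.2.1]
    obtain ⟨g, hg⟩ := exists_orderEmbOfFin_comp_eq (f.2.1.1.comp Sum.inl_injective)
      (fun _ _ h => f.2.2 (Sum.LiftRel.inl h)) U hU hrange
    obtain ⟨h, hh⟩ := exists_orderEmbOfFin_comp_eq (f.2.1.1.comp Sum.inr_injective)
      (fun _ _ h => f.2.2 (Sum.LiftRel.inr h)) Uᶜ (Finset.card_compl_fin hU) hrange'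
    refine ⟨(⟨U, hU⟩, g, h), Subtype.ext (funext ?_)⟩
    rintro (x | y)
    · exact hg x
    · exact hh y

end DecreasingLabelling

end Labelling

section FinsetLabelling

open DecreasingLabelling

variable {α β : Type*}

abbrev FinsetLabelling (r : α → α → Prop) (S : Finset α) : Type _ :=
  DecreasingLabelling (fun p q : S => r p q) S.card

variable {r : α → α → Prop}

theorem card_finsetLabelling_image [DecidableEq β] {s : β → β → Prop} {φ : α → β}
    (hφ : φ.Injective) (hrs : ∀ p q, s (φ p) (φ q) ↔ r p q) (S : Finset α) :
    Nat.card (FinsetLabelling s (S.image φ)) = Nat.card (FinsetLabelling r S) := by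
  let e : S ≃ S.image φ := Equiv.ofBijective (fun p => ⟨φ p, Finset.mem_image_of_mem φ p.2⟩)
    ⟨fun p q h => Subtype.ext (hφ (congrArg Subtype.val h)), fun ⟨y, hy⟩ => by
      obtain ⟨x, hx, rfl⟩ := Finset.mem_image.1 hy
      exact ⟨⟨x, hx⟩, rfl⟩⟩
  rw [FinsetLabelling, Finset.card_image_of_injective S hφ]
  exact (Nat.card_congr (relIsoCongr ⟨e, hrs _ _⟩ _)).symm

theorem card_finsetLabelling_insert [DecidableEq α] {t : α} {S : Finset α} (ht : t ∉ S)
    (htop : ∀ q ∈ S, r t q) (hbot : ∀ q, ¬ r q t) :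
    Nat.card (FinsetLabelling r (insert t S)) = Nat.card (FinsetLabelling r S) := by
  let t' : ↥(insert t S) := ⟨t, Finset.mem_insert_self t S⟩
  let e : {q : ↥(insert t S) // q ≠ t'} ≃ S :=
    { toFun q := ⟨q.1, Finset.mem_of_mem_insert_of_ne q.1.2 fun h => q.2 (Subtype.ext h)⟩
      invFun p := ⟨⟨p, Finset.mem_insert_of_mem p.2⟩, fun h => ht <| by
        rw [← show (p : α) = t from congrArg Subtype.val h]; exact p.2⟩ }
  rw [FinsetLabelling, Finset.card_insert_of_notMem ht,
    card_succ_of_isTop t' (fun q hq => htop q (e ⟨q, hq⟩).2) (fun q => hbot q)]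
  exact Nat.card_congr (relIsoCongr (s := fun p q : S => r p q) ⟨e, Iff.rfl⟩ _)

theorem card_finsetLabelling_union [DecidableEq α] {S T : Finset α} (hST : Disjoint S T)
    (hrST : ∀ p ∈ S, ∀ q ∈ T, ¬ r p q ∧ ¬ r q p) :
    Nat.card (FinsetLabelling r (S ∪ T)) =
      (S.card + T.card).choose S.card * Nat.card (FinsetLabelling r S) *
        Nat.card (FinsetLabelling r T) := by
  let e : Sum.LiftRel (fun p q : S => r p q) (fun p q : T => r p q) ≃r
      (fun p q : ↥(S ∪ T) => r p q) :=
    ⟨Equiv.Finset.union S T hST, fun {a b} => by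
      rcases a with a | a <;> rcases b with b | b <;> simp [*]⟩
  rw [FinsetLabelling, Finset.card_union_of_disjoint hST, ← Nat.card_congr (relIsoCongr e _),
    card_sum, Fintype.card_coe, Nat.add_sub_cancel_left]

end FinsetLabelling

def List.IsStrictPrefix {α : Type*} (p q : List α) : Prop := p <+: q ∧ p ≠ q

namespace List

variable {α : Type*} {a b : α} {p q : List α}

theorem cons_isStrictPrefix_cons : (a :: p).IsStrictPrefix (a :: q) ↔ p.IsStrictPrefix q := by
  simp [IsStrictPrefix]

theorem not_cons_isStrictPrefix_cons (h : a ≠ b) : ¬ (a :: p).IsStrictPrefix (b :: q) :=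
  fun hab => h (List.cons_prefix_cons.1 hab.1).1

theorem nil_isStrictPrefix (hq : q ≠ []) : ([] : List α).IsStrictPrefix q :=
  ⟨List.nil_prefix, hq.symm⟩

theorem getLast?_cons_eq_some_iff :
    (a :: p).getLast? = some b ↔ (p = [] ∧ a = b) ∨ p.getLast? = some b := by
  cases p <;> simp [List.getLast?_cons_cons]

theorem not_isStrictPrefix_nil : ¬ p.IsStrictPrefix [] :=
  fun h => h.2 (List.prefix_nil.1 h.1)

end List

namespace BT

def rootPos (B : BT) : Finset (List Bool) := B.positions.filter (· = [])

theorem leftPos_node (L R : BT) :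
    (node L R).leftPos =
      (L.rootPos ∪ L.leftPos).image (List.cons false) ∪ R.leftPos.image (List.cons true) := by
  ext p
  rcases p with _ | ⟨b, q⟩
  · simp [leftPos, positions]
  cases b <;> simp [leftPos, positions, rootPos, List.getLast?_cons_eq_some_iff, and_or_left]

theorem rightPos_node (L R : BT) :
    (node L R).rightPos =
      L.rightPos.image (List.cons false) ∪ (R.rootPos ∪ R.rightPos).image (List.cons true) := by
  ext p
  rcases p with _ | ⟨b, q⟩
  · simp [rightPos, positions]
  cases b <;> simp [rightPos, positions, rootPos, List.getLast?_cons_eq_some_iff, and_or_left]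

theorem nil_notMem_leftPos (B : BT) : [] ∉ B.leftPos := by simp [leftPos]

theorem nil_notMem_rightPos (B : BT) : [] ∉ B.rightPos := by simp [rightPos]

theorem card_finsetLabelling_rootPos_union (B : BT) {S : Finset (List Bool)} (hS : [] ∉ S) :
    Nat.card (FinsetLabelling List.IsStrictPrefix (B.rootPos ∪ S)) =
      Nat.card (FinsetLabelling List.IsStrictPrefix S) := by
  cases B with
  | leaf => simp [rootPos, positions]
  | node l r =>
    have hroot : (node l r).rootPos = {[]} := by ext; simp +contextual [rootPos, positions]
    rw [hroot, ← Finset.insert_eq]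
    exact card_finsetLabelling_insert hS
      (fun q hq => List.nil_isStrictPrefix (ne_of_mem_of_not_mem hq hS))
      (fun _ => List.not_isStrictPrefix_nil)

theorem card_image_cons_union (S T : Finset (List Bool)) :
    (S.image (List.cons false) ∪ T.image (List.cons true)).card = S.card + T.card := by
  rw [Finset.card_union_of_disjoint (by simp [Finset.disjoint_left]),
    Finset.card_image_of_injective _ List.cons_injective,
    Finset.card_image_of_injective _ List.cons_injective]

theorem card_finsetLabelling_image_cons_union (S T : Finset (List Bool)) :
    Nat.card (FinsetLabelling List.IsStrictPrefix
        (S.image (List.cons false) ∪ T.image (List.cons true))) =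
      (S.card + T.card).choose S.card *
        Nat.card (FinsetLabelling List.IsStrictPrefix S) *
        Nat.card (FinsetLabelling List.IsStrictPrefix T) := by
  rw [card_finsetLabelling_union (by simp [Finset.disjoint_left]),
    card_finsetLabelling_image List.cons_injective (fun _ _ => List.cons_isStrictPrefix_cons),
    card_finsetLabelling_image List.cons_injective (fun _ _ => List.cons_isStrictPrefix_cons),
    Finset.card_image_of_injective _ List.cons_injective,
    Finset.card_image_of_injective _ List.cons_injective]
  simp only [Finset.mem_image]
  rintro _ ⟨p, -, rfl⟩ _ ⟨q, -, rfl⟩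
  exact ⟨List.not_cons_isStrictPrefix_cons Bool.false_ne_true,
    List.not_cons_isStrictPrefix_cons Bool.false_ne_true.symm⟩

theorem card_finsetLabelling_leftPos_node (L R : BT) :
    Nat.card (FinsetLabelling List.IsStrictPrefix (node L R).leftPos) =
      (node L R).leftPos.card.choose R.leftPos.card *
        Nat.card (FinsetLabelling List.IsStrictPrefix L.leftPos) *
        Nat.card (FinsetLabelling List.IsStrictPrefix R.leftPos) := by
  rw [leftPos_node, card_image_cons_union, card_finsetLabelling_image_cons_union,
    Nat.choose_symm_add, card_finsetLabelling_rootPos_union L (nil_notMem_leftPos L)]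

theorem card_finsetLabelling_rightPos_node (L R : BT) :
    Nat.card (FinsetLabelling List.IsStrictPrefix (node L R).rightPos) =
      (node L R).rightPos.card.choose L.rightPos.card *
        Nat.card (FinsetLabelling List.IsStrictPrefix L.rightPos) *
        Nat.card (FinsetLabelling List.IsStrictPrefix R.rightPos) := by
  rw [rightPos_node, card_image_cons_union, card_finsetLabelling_image_cons_union,
    card_finsetLabelling_rootPos_union R (nil_notMem_rightPos R)]

end BT

def NAT.equivProd (B : BT) :
    NAT B ≃ FinsetLabelling List.IsStrictPrefix B.leftPos ×
      FinsetLabelling List.IsStrictPrefix B.rightPos where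
  toFun T := (⟨T.labL, T.bijL, fun p q h => T.ancL p q h.1 h.2⟩,
    ⟨T.labR, T.bijR, fun p q h => T.ancR p q h.1 h.2⟩)
  invFun x := ⟨x.1.1, x.2.1, x.1.2.1, x.2.2.1, fun _ _ h₁ h₂ => x.1.2.2 ⟨h₁, h₂⟩,
    fun _ _ h₁ h₂ => x.2.2.2 ⟨h₁, h₂⟩⟩

/-- For a nonempty binary tree `B = node L R`, the number of
non-ambiguous trees of shape `B` is
`C(|LV(B)|, |LV_B(R)|) * C(|RV(B)|, |RV_B(L)|) * |NAT(L)| * |NAT(R)|`,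
where the left children of `B` lying in `R` are in bijection with the left children
of `R` (the root of `R` being a right child of `B`), and symmetrically.
The empty tree has exactly one non-ambiguous labelling. -/
theorem stmt0 (L R : BT) :
    Nat.card (NAT (BT.node L R)) =
      Nat.choose (BT.node L R).leftPos.card R.leftPos.card *
        Nat.choose (BT.node L R).rightPos.card L.rightPos.card *
        Nat.card (NAT L) * Nat.card (NAT R) := by
  simp only [Nat.card_congr (NAT.equivProd _), Nat.card_prod,
    BT.card_finsetLabelling_leftPos_node, BT.card_finsetLabelling_rightPos_node]
  ring
end

section
/- Hook-length formula for non-ambiguous trees: for any nonempty binary tree B, the number of non-ambiguous trees of shape B equals |LV(B)|! · |RV(B)|! divided by the product, over all left children U of B, of EL(U), times the product, over all right children U of B, of ER(U). -/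
/-! The left labels of a non-ambiguous tree form a decreasing labelling of the forest of left
children ordered by ancestry, i.e. by the prefix order on positions, and likewise on the right.
In a decreasing labelling of a finite forest `S` the largest label sits on a root `r`, and
erasing `r` leaves a decreasing labelling of `S \ {r}` in which no hook changes. Since the hooks
of the roots add up to `|S|`, induction on `S` gives `#labellings * ∏ hooks = |S|!`. -/

open Finset

theorem Finset.sum_card_filter_eq_card_of_existsUnique {ι κ : Type*} {s : Finset ι}
    {t : Finset κ} {r : ι → κ → Prop} [∀ a b, Decidable (r a b)]
    (h : ∀ b ∈ t, ∃! a, a ∈ s ∧ r a b) : ∑ a ∈ s, #{b ∈ t | r a b} = #t := by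
  refine (sum_card_bipartiteAbove_eq_sum_card_bipartiteBelow r).trans ?_
  rw [card_eq_sum_ones]
  refine sum_congr rfl fun b hb => card_eq_one.2 ?_
  obtain ⟨a, ha, hu⟩ := h b hb
  exact ⟨a, by ext a'; simpa [Finset.bipartiteBelow] using ⟨fun h' => hu a' h', fun e => e ▸ ha⟩⟩

namespace PrefixForest

open Function

variable {α : Type*} [DecidableEq α] (S : Finset (List α))

def hook (p : List α) : ℕ := #{q ∈ S | p <+: q}

def roots : Finset (List α) := {p ∈ S | ∀ q ∈ S, q <+: p → q = p}

variable {S}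

theorem mem_of_mem_roots {r : List α} (hr : r ∈ roots S) : r ∈ S := (mem_filter.1 hr).1

theorem eq_of_mem_roots {r q : List α} (hr : r ∈ roots S) (hq : q ∈ S) (hqr : q <+: r) :
    q = r :=
  (mem_filter.1 hr).2 q hq hqr

theorem exists_mem_roots_isPrefix {p : List α} (hp : p ∈ S) : ∃ r ∈ roots S, r <+: p := by
  obtain ⟨r, hr, hmin⟩ := exists_min_image {q ∈ S | q <+: p} List.length ⟨p, by simpa using hp⟩
  rw [mem_filter] at hr
  refine ⟨r, mem_filter.2 ⟨hr.1, fun q hq hqr => ?_⟩, hr.2⟩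
  exact hqr.eq_of_length (le_antisymm hqr.length_le (hmin q (mem_filter.2 ⟨hq, hqr.trans hr.2⟩)))

theorem existsUnique_mem_roots_isPrefix {p : List α} (hp : p ∈ S) :
    ∃! r, r ∈ roots S ∧ r <+: p := by
  obtain ⟨r, hr, hrp⟩ := exists_mem_roots_isPrefix hp
  refine ⟨r, ⟨hr, hrp⟩, fun r' ⟨hr', hr'p⟩ => ?_⟩
  rcases List.prefix_or_prefix_of_prefix hrp hr'p with h | h
  · exact (eq_of_mem_roots hr' (mem_of_mem_roots hr) h).symm
  · exact eq_of_mem_roots hr (mem_of_mem_roots hr') h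

theorem sum_hook_roots : ∑ r ∈ roots S, hook S r = #S :=
  sum_card_filter_eq_card_of_existsUnique fun _ => existsUnique_mem_roots_isPrefix

theorem hook_erase_root {r p : List α} (hr : r ∈ roots S) (hp : p ∈ S.erase r) :
    hook (S.erase r) p = hook S p := by
  rw [hook, filter_erase, erase_eq_of_notMem]
  · rfl
  intro hrp
  obtain ⟨hpr, hpS⟩ := mem_erase.1 hp
  exact hpr (eq_of_mem_roots hr hpS (mem_filter.1 hrp).2)

/-- Labels are natural numbers, with the junk value `0` off `S`, so that removing or adding a
root is a `Function.update`. -/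
structure IsDecLabelling (S : Finset (List α)) (f : List α → ℕ) : Prop where
  eq_zero_of_notMem : ∀ p ∉ S, f p = 0
  lt_card : ∀ p ∈ S, f p < #S
  injOn : Set.InjOn f S
  lt_of_isPrefix : ∀ p ∈ S, ∀ q ∈ S, p <+: q → p ≠ q → f q < f p

variable (S) in
def decLabellings : Set (List α → ℕ) := {f | IsDecLabelling S f}

theorem finite_decLabellings : (decLabellings S).Finite := by
  refine (Set.finite_range fun (g : {p // p ∈ S} → Fin #S) p =>
    if h : p ∈ S then (g ⟨p, h⟩ : ℕ) else 0).subset fun f hf => ?_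
  refine ⟨fun p => ⟨f p, hf.lt_card p p.2⟩, funext fun p => ?_⟩
  by_cases h : p ∈ S <;> simp [h, hf.eq_zero_of_notMem]

theorem decLabellings_empty : decLabellings (∅ : Finset (List α)) = {0} := by
  ext f
  refine ⟨fun hf => funext fun p => hf.eq_zero_of_notMem p (notMem_empty p), ?_⟩
  rintro rfl
  exact ⟨fun _ _ => rfl, by simp, by simp, by simp⟩

theorem IsDecLabelling.update_root_zero {f : List α → ℕ} (hf : IsDecLabelling S f)
    {r : List α} (hr : r ∈ roots S) (hfr : f r = #S - 1) :
    IsDecLabelling (S.erase r) (update f r 0) := by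
  have hrS := mem_of_mem_roots hr
  constructor
  · intro p hp
    by_cases hpr : p = r
    · simp [hpr]
    · simpa [hpr] using hf.eq_zero_of_notMem p (by simpa [hpr] using hp)
  · intro p hp
    obtain ⟨hpr, hpS⟩ := mem_erase.1 hp
    have hne : f p ≠ f r := fun h => hpr (hf.injOn hpS hrS h)
    have := hf.lt_card p hpS
    rw [update_of_ne hpr, card_erase_of_mem hrS]
    omega
  · intro p hp q hq hpq
    simp only [coe_erase, Set.mem_sdiff, Set.mem_singleton_iff] at hp hq
    rw [update_of_ne hp.2, update_of_ne hq.2] at hpq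
    exact hf.injOn hp.1 hq.1 hpq
  · intro p hp q hq hpq hne
    rw [update_of_ne (ne_of_mem_erase hp), update_of_ne (ne_of_mem_erase hq)]
    exact hf.lt_of_isPrefix p (mem_of_mem_erase hp) q (mem_of_mem_erase hq) hpq hne

theorem IsDecLabelling.update_root_last {r : List α} (hr : r ∈ roots S) {g : List α → ℕ}
    (hg : IsDecLabelling (S.erase r) g) : IsDecLabelling S (update g r (#S - 1)) := by
  have hrS := mem_of_mem_roots hr
  have hlt : ∀ p ∈ S, p ≠ r → g p < #S - 1 := fun p hp hpr => by
    simpa [card_erase_of_mem hrS] using hg.lt_card p (mem_erase.2 ⟨hpr, hp⟩)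
  have hpos := card_pos.2 ⟨r, hrS⟩
  constructor
  · intro p hp
    have hpr : p ≠ r := fun h => hp (h ▸ hrS)
    rw [update_of_ne hpr]
    exact hg.eq_zero_of_notMem p (fun h => hp (mem_of_mem_erase h))
  · intro p hp
    by_cases hpr : p = r
    · subst hpr; simp only [update_self]; omega
    · rw [update_of_ne hpr]; have := hlt p hp hpr; omega
  · intro p hp q hq hpq
    by_cases hpr : p = r <;> by_cases hqr : q = r
    · rw [hpr, hqr]
    · subst hpr; rw [update_self, update_of_ne hqr] at hpq; have := hlt q hq hqr; omega
    · subst hqr; rw [update_self, update_of_ne hpr] at hpq; have := hlt p hp hpr; omega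
    · rw [update_of_ne hpr, update_of_ne hqr] at hpq
      exact hg.injOn (by simp [hpr, hp]) (by simp [hqr, hq]) hpq
  · intro p hp q hq hpq hne
    have hqr : q ≠ r := fun h => hne (by subst h; exact eq_of_mem_roots hr hp hpq)
    rw [update_of_ne hqr]
    by_cases hpr : p = r
    · subst hpr; rw [update_self]; exact hlt q hq hqr
    · rw [update_of_ne hpr]
      exact hg.lt_of_isPrefix p (mem_erase.2 ⟨hpr, hp⟩) q (mem_erase.2 ⟨hqr, hq⟩) hpq hne

theorem ncard_decLabellings_root {r : List α} (hr : r ∈ roots S) :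
    {f ∈ decLabellings S | f r = #S - 1}.ncard = (decLabellings (S.erase r)).ncard := by
  refine Set.BijOn.ncard_eq (f := fun f => update f r 0)
    (Set.InvOn.bijOn (f' := fun g => update g r (#S - 1)) ⟨?_, ?_⟩ ?_ ?_)
  · rintro f ⟨-, hfr⟩
    simp only [update_idem, ← hfr, update_eq_self]
  · intro g hg
    have hgr : g r = 0 := hg.eq_zero_of_notMem r (notMem_erase r S)
    simp only [update_idem, ← hgr, update_eq_self]
  · rintro f ⟨hf, hfr⟩
    exact hf.update_root_zero hr hfr
  · intro g hg
    exact ⟨hg.update_root_last hr, update_self ..⟩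

theorem IsDecLabelling.existsUnique_root {f : List α → ℕ} (hf : IsDecLabelling S f)
    (hS : S.Nonempty) : ∃! r, r ∈ roots S ∧ f r = #S - 1 := by
  have hpos := hS.card_pos
  obtain ⟨r, hrS, hfr⟩ := surjOn_of_injOn_of_card_le f (t := range #S)
    (fun p hp => by simpa using hf.lt_card p hp) hf.injOn (by simp)
    (show #S - 1 ∈ range #S by simp; omega)
  refine ⟨r, ⟨mem_filter.2 ⟨hrS, fun q hq hqr => ?_⟩, hfr⟩,
    fun r' ⟨hr', hfr'⟩ => hf.injOn (mem_of_mem_roots hr') hrS (hfr'.trans hfr.symm)⟩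
  by_contra hne
  have := hf.lt_of_isPrefix q hq r hrS hqr hne
  have := hf.lt_card q hq
  omega

theorem ncard_decLabellings_eq_sum (hS : S.Nonempty) :
    (decLabellings S).ncard = ∑ r ∈ roots S, (decLabellings (S.erase r)).ncard := by
  rw [Set.ncard_eq_toFinset_card _ finite_decLabellings, ← sum_card_filter_eq_card_of_existsUnique
    (s := roots S) (r := fun r f => f r = #S - 1) fun f hf =>
      IsDecLabelling.existsUnique_root (finite_decLabellings.mem_toFinset.1 hf) hS]
  refine sum_congr rfl fun r hr => ?_
  rw [← ncard_decLabellings_root hr, ← Set.ncard_coe_finset, coe_filter]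
  simp

theorem ncard_decLabellings_mul_prod_hook (S : Finset (List α)) :
    (decLabellings S).ncard * ∏ p ∈ S, hook S p = (#S).factorial := by
  induction S using Finset.strongInduction with
  | H S ih =>
  rcases S.eq_empty_or_nonempty with rfl | hS
  · simp [decLabellings_empty]
  calc (decLabellings S).ncard * ∏ p ∈ S, hook S p
      = ∑ r ∈ roots S, (decLabellings (S.erase r)).ncard * ∏ p ∈ S, hook S p := by
        rw [ncard_decLabellings_eq_sum hS, sum_mul]
    _ = ∑ r ∈ roots S, hook S r * (#S - 1).factorial := sum_congr rfl fun r hr => by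
        have hrS := mem_of_mem_roots hr
        rw [← mul_prod_erase S _ hrS, ← prod_congr rfl fun p hp => hook_erase_root hr hp,
          mul_left_comm, ih _ (erase_ssubset hrS), card_erase_of_mem hrS]
    _ = (#S).factorial := by rw [← sum_mul, sum_hook_roots, Nat.mul_factorial_pred hS.card_pos.ne']

theorem IsDecLabelling.of_fin {g : {p // p ∈ S} → Fin #S} (hg : Injective g)
    (hdec : ∀ p q : {p // p ∈ S}, p.1 <+: q.1 → p.1 ≠ q.1 → g q < g p) :
    IsDecLabelling S fun p => if h : p ∈ S then (g ⟨p, h⟩ : ℕ) else 0 where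
  eq_zero_of_notMem p hp := dif_neg hp
  lt_card p hp := by simp [hp]
  injOn p hp q hq hpq := congrArg Subtype.val
    (hg (Fin.ext (by simpa [Finset.mem_coe.1 hp, Finset.mem_coe.1 hq] using hpq)))
  lt_of_isPrefix p hp q hq hpq hne := by simpa [hp, hq] using hdec ⟨p, hp⟩ ⟨q, hq⟩ hpq hne

variable (S) in
def finDecLabellingsEquiv :
    {g : {p // p ∈ S} → Fin #S //
      Bijective g ∧ ∀ p q : {p // p ∈ S}, p.1 <+: q.1 → p.1 ≠ q.1 → g q < g p} ≃
      decLabellings S where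
  toFun g := ⟨_, IsDecLabelling.of_fin g.2.1.1 g.2.2⟩
  invFun f := by
    refine ⟨fun p => ⟨f.1 p, f.2.lt_card p p.2⟩, ?_, fun p q hpq hne => ?_⟩
    · refine (Fintype.bijective_iff_injective_and_card _).2 ⟨fun p q hpq => ?_, by simp⟩
      exact Subtype.ext (f.2.injOn p.2 q.2 (Fin.ext_iff.1 hpq))
    · exact f.2.lt_of_isPrefix p p.2 q q.2 hpq hne
  left_inv g := by ext p; simp
  right_inv f := by
    ext p
    by_cases h : p ∈ S <;> simp [h, f.2.eq_zero_of_notMem]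

end PrefixForest

namespace BT

open Finset

theorem cons_mem_positions {l r : BT} {b : Bool} {p : List Bool} :
    b :: p ∈ (node l r).positions ↔ p ∈ (if b then r else l).positions := by
  cases b <;> simp [positions]

theorem append_mem_positions_iff {B : BT} {p : List Bool} (hp : p ∈ B.positions)
    (q : List Bool) : p ++ q ∈ B.positions ↔ q ∈ (B.subtreeAt p).positions := by
  induction p generalizing B with
  | nil => rfl
  | cons b p ih =>
    cases B with
    | leaf => simp [positions] at hp
    | node l r => exact cons_mem_positions.trans (ih (cons_mem_positions.1 hp))

theorem hook_filter_getLast? (B : BT) (b : Bool) {p : List Bool}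
    (hp : p ∈ {q ∈ B.positions | q.getLast? = some b}) :
    PrefixForest.hook {q ∈ B.positions | q.getLast? = some b} p =
      #{q ∈ (B.subtreeAt p).positions | q.getLast? = some b} + 1 := by
  have hpB := (mem_filter.1 hp).1
  have hsubtree : {q ∈ {q ∈ B.positions | q.getLast? = some b} | p <+: q} =
      (insert [] {q ∈ (B.subtreeAt p).positions | q.getLast? = some b}).image (p ++ ·) := by
    ext q
    simp only [mem_filter, mem_image, mem_insert]
    constructor
    · rintro ⟨⟨hq, hqb⟩, t, rfl⟩
      refine ⟨t, ?_, rfl⟩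
      rcases eq_or_ne t [] with rfl | ht
      · exact Or.inl rfl
      · rw [List.getLast?_append_of_ne_nil _ ht] at hqb
        exact Or.inr ⟨(append_mem_positions_iff hpB t).1 hq, hqb⟩
    · rintro ⟨t, rfl | ⟨ht, htb⟩, rfl⟩
      · simpa using hp
      · have ht' : t ≠ [] := by rintro rfl; simp at htb
        rw [List.getLast?_append_of_ne_nil _ ht']
        exact ⟨⟨(append_mem_positions_iff hpB t).2 ht, htb⟩, t, rfl⟩
  rw [PrefixForest.hook, hsubtree, card_image_of_injective _ fun _ _ => List.append_cancel_left,
    card_insert_of_notMem (by simp)]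

theorem hook_leftPos {B : BT} {p : List Bool} (hp : p ∈ B.leftPos) :
    PrefixForest.hook B.leftPos p = #(B.subtreeAt p).leftPos + 1 :=
  B.hook_filter_getLast? false hp

theorem hook_rightPos {B : BT} {p : List Bool} (hp : p ∈ B.rightPos) :
    PrefixForest.hook B.rightPos p = #(B.subtreeAt p).rightPos + 1 :=
  B.hook_filter_getLast? true hp

end BT

def NAT.equivDecLabellings (B : BT) :
    NAT B ≃ PrefixForest.decLabellings B.leftPos × PrefixForest.decLabellings B.rightPos :=
  ({ toFun T := (⟨T.labL, T.bijL, T.ancL⟩, ⟨T.labR, T.bijR, T.ancR⟩)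
     invFun P := ⟨P.1.1, P.2.1, P.1.2.1, P.2.2.1, P.1.2.2, P.2.2.2⟩ } :
    NAT B ≃ _ × _).trans
    ((PrefixForest.finDecLabellingsEquiv _).prodCongr (PrefixForest.finDecLabellingsEquiv _))

theorem stmt1_general (B : BT) :
    (Nat.card (NAT B) : ℚ) =
      ((B.leftPos.card).factorial * (B.rightPos.card).factorial : ℚ) /
        ((∏ p ∈ B.leftPos, (((B.subtreeAt p).leftPos.card + 1 : ℕ) : ℚ)) *
          ∏ p ∈ B.rightPos, (((B.subtreeAt p).rightPos.card + 1 : ℕ) : ℚ)) := by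
  have hL := PrefixForest.ncard_decLabellings_mul_prod_hook B.leftPos
  have hR := PrefixForest.ncard_decLabellings_mul_prod_hook B.rightPos
  rw [Finset.prod_congr rfl fun p => BT.hook_leftPos] at hL
  rw [Finset.prod_congr rfl fun p => BT.hook_rightPos] at hR
  rw [Nat.card_congr (NAT.equivDecLabellings B), Nat.card_prod, Nat.card_coe_set_eq,
    Nat.card_coe_set_eq, eq_div_iff (by positivity), ← hL, ← hR]
  push_cast
  ring

/-- Hook-length formula for non-ambiguous trees: for any nonempty
binary tree `B`, the number of non-ambiguous trees of shape `B` equals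
`|LV(B)|! * |RV(B)|!` divided by the product over all left children `U` of `EL(U)`
(the number of left children in the subtree rooted at `U`, counting `U` itself)
times the product over all right children `U` of `ER(U)`. -/
theorem stmt1 (B : BT) (hB : B ≠ BT.leaf) :
    (Nat.card (NAT B) : ℚ) =
      ((B.leftPos.card).factorial * (B.rightPos.card).factorial : ℚ) /
        ((∏ p ∈ B.leftPos, (((B.subtreeAt p).leftPos.card + 1 : ℕ) : ℚ)) *
          ∏ p ∈ B.rightPos, (((B.subtreeAt p).rightPos.card + 1 : ℕ) : ℚ)) :=
  stmt1_general B
end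

section
/- The generating functions of non-ambiguous trees satisfy the fixed-point differential equations LGFN = y + x + ∫_0^x ∫_0^y (∂_x LGFN)(u,v) · (∂_y LGFN)(u,v) du dv and GFN = (1 + ∫_0^x GFN(u,y) du) · (1 + ∫_0^y GFN(x,v) dv), as identities of formal power series in ℚ[[x,y]]. -/
/-- The number of non-ambiguous trees (with nonempty shape) of geometric size `i × j`,
i.e. with `|LV| + 1 = i` and `|RV| + 1 = j`. -/
noncomputable def natCount (i j : ℕ) : ℕ :=
  Nat.card {T : Σ B : BT, NAT B //
    T.1 ≠ BT.leaf ∧ T.1.leftPos.card + 1 = i ∧ T.1.rightPos.card + 1 = j}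

/-- `LGFN`, the doubly exponential generating series of all non-ambiguous trees,
including the two empty ones `∅_L` (of geometric size `(0,1)`, contributing `y`)
and `∅_R` (of geometric size `(1,0)`, contributing `x`):
the coefficient of `x^i y^j` is (number of NATs of geometric size `i×j`) / (i! j!). -/
noncomputable def LGFN : MvPowerSeries (Fin 2) ℚ := fun d =>
  (if d 0 = 1 ∧ d 1 = 0 then 1 else 0) + (if d 0 = 0 ∧ d 1 = 1 then 1 else 0) +
    (natCount (d 0) (d 1) : ℚ) / (((d 0).factorial : ℚ) * ((d 1).factorial : ℚ))

/-- `GFN = ∂ₓ∂_y LGFN`: the coefficient of `x^i y^j` is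
(number of nonempty NATs of geometric size `(i+1)×(j+1)`) / (i! j!). -/
noncomputable def GFN : MvPowerSeries (Fin 2) ℚ := fun d =>
  (natCount (d 0 + 1) (d 1 + 1) : ℚ) / (((d 0).factorial : ℚ) * ((d 1).factorial : ℚ))

/-- Formal partial derivative in `x`. -/
noncomputable def dX (f : MvPowerSeries (Fin 2) ℚ) : MvPowerSeries (Fin 2) ℚ :=
  fun d => ((d 0 : ℚ) + 1) * f (d + Finsupp.single 0 1)

/-- Formal partial derivative in `y`. -/
noncomputable def dY (f : MvPowerSeries (Fin 2) ℚ) : MvPowerSeries (Fin 2) ℚ :=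
  fun d => ((d 1 : ℚ) + 1) * f (d + Finsupp.single 1 1)

/-- Formal integral `∫_0^x f(u,y) du`. -/
noncomputable def iX (f : MvPowerSeries (Fin 2) ℚ) : MvPowerSeries (Fin 2) ℚ :=
  fun d => if d 0 = 0 then 0 else ((d 0 : ℚ))⁻¹ * f (d - Finsupp.single 0 1)

/-- Formal integral `∫_0^y f(x,v) dv`. -/
noncomputable def iY (f : MvPowerSeries (Fin 2) ℚ) : MvPowerSeries (Fin 2) ℚ :=
  fun d => if d 1 = 0 then 0 else ((d 1 : ℚ))⁻¹ * f (d - Finsupp.single 1 1)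

@[ext]
structure DecLabeling {α : Type*} (r : α → α → Prop) (S : Finset α) where
  lab : S → Fin S.card
  bijective : Function.Bijective lab
  lt_of_rel : ∀ p q : S, r p q → lab q < lab p

namespace DecLabeling

variable {α β : Type*} {r : α → α → Prop} {S : Finset α}

instance : Finite (DecLabeling r S) :=
  Finite.of_injective lab fun _ _ => DecLabeling.ext

instance : Unique (DecLabeling r (∅ : Finset α)) where
  default :=
    { lab := fun p => (Finset.notMem_empty _ p.2).elim
      bijective := ⟨fun p => (Finset.notMem_empty _ p.2).elim, fun i => i.elim0⟩
      lt_of_rel := fun p => (Finset.notMem_empty _ p.2).elim }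
  uniq _ := DecLabeling.ext (funext fun p => (Finset.notMem_empty _ p.2).elim)

lemma card_empty : Nat.card (DecLabeling r (∅ : Finset α)) = 1 := Nat.card_unique

lemma val_lab_pos {m : α} (D : DecLabeling r S) (hm : m ∈ S) (h0 : (D.lab ⟨m, hm⟩ : ℕ) = 0)
    (p : S) (hp : p.1 ≠ m) : 0 < (D.lab p : ℕ) := by
  refine Nat.pos_of_ne_zero fun hp0 => hp ?_
  exact congrArg Subtype.val (D.bijective.1 (Fin.ext (hp0.trans h0.symm)))

lemma card_lab_eq_zero_of_rel {m q : α} (hm : m ∈ S) (hq : q ∈ S) (hmq : r m q) :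
    Nat.card {D : DecLabeling r S // (D.lab ⟨m, hm⟩ : ℕ) = 0} = 0 := by
  have : IsEmpty {D : DecLabeling r S // (D.lab ⟨m, hm⟩ : ℕ) = 0} := ⟨fun D => by
    have := D.1.lt_of_rel ⟨m, hm⟩ ⟨q, hq⟩ hmq
    rw [Fin.lt_def, D.2] at this
    omega⟩
  exact Nat.card_of_isEmpty

variable [DecidableEq α] {m : α}

def eraseZero (D : DecLabeling r S) (hm : m ∈ S) (h0 : (D.lab ⟨m, hm⟩ : ℕ) = 0) :
    DecLabeling r (S.erase m) where
  lab p := ⟨D.lab ⟨p, Finset.mem_of_mem_erase p.2⟩ - 1, by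
    have := (D.lab ⟨p, Finset.mem_of_mem_erase p.2⟩).2
    have := D.val_lab_pos hm h0 ⟨p, Finset.mem_of_mem_erase p.2⟩ (Finset.ne_of_mem_erase p.2)
    rw [Finset.card_erase_of_mem hm]; omega⟩
  bijective := by
    refine (Fintype.bijective_iff_injective_and_card _).2 ⟨fun p q hpq => ?_, by simp⟩
    have hp := D.val_lab_pos hm h0 ⟨p, Finset.mem_of_mem_erase p.2⟩ (Finset.ne_of_mem_erase p.2)
    have hq := D.val_lab_pos hm h0 ⟨q, Finset.mem_of_mem_erase q.2⟩ (Finset.ne_of_mem_erase q.2)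
    have hv : (D.lab ⟨p, Finset.mem_of_mem_erase p.2⟩ : ℕ) =
        D.lab ⟨q, Finset.mem_of_mem_erase q.2⟩ := by
      have := congrArg Fin.val hpq
      dsimp only at this
      omega
    exact Subtype.ext (Subtype.mk.inj (D.bijective.1 (Fin.ext hv)))
  lt_of_rel p q hpq := by
    have := D.lt_of_rel ⟨p, Finset.mem_of_mem_erase p.2⟩ ⟨q, Finset.mem_of_mem_erase q.2⟩
      hpq
    have hq := D.val_lab_pos hm h0 ⟨q, Finset.mem_of_mem_erase q.2⟩ (Finset.ne_of_mem_erase q.2)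
    rw [Fin.lt_def] at this ⊢
    simp only
    omega

def insertZero (E : DecLabeling r (S.erase m)) (hm : m ∈ S) (hmin : ∀ q ∈ S, ¬ r m q) :
    DecLabeling r S where
  lab p := if h : p.1 = m then ⟨0, Finset.card_pos.2 ⟨m, hm⟩⟩ else
    ⟨E.lab ⟨p, Finset.mem_erase.2 ⟨h, p.2⟩⟩ + 1, by
      have := (E.lab ⟨p, Finset.mem_erase.2 ⟨h, p.2⟩⟩).2
      have := Finset.card_erase_of_mem hm; omega⟩
  bijective := by
    refine (Fintype.bijective_iff_injective_and_card _).2 ⟨fun p q hpq => ?_, by simp⟩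
    by_cases hp : p.1 = m <;> by_cases hq : q.1 = m <;>
      simp only [hp, hq, dite_true, dite_false, Fin.mk.injEq] at hpq
    · exact Subtype.ext (hp.trans hq.symm)
    · omega
    · omega
    · have hv : (E.lab ⟨p, Finset.mem_erase.2 ⟨hp, p.2⟩⟩ : ℕ) =
          E.lab ⟨q, Finset.mem_erase.2 ⟨hq, q.2⟩⟩ := by
        omega
      exact Subtype.ext (Subtype.mk.inj (E.bijective.1 (Fin.ext hv)))
  lt_of_rel p q hpq := by
    have hp : p.1 ≠ m := fun h => hmin q q.2 (h ▸ hpq)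
    by_cases hq : q.1 = m
    · simp [hp, hq, Fin.lt_def]
    · have := E.lt_of_rel ⟨p, Finset.mem_erase.2 ⟨hp, p.2⟩⟩ ⟨q, Finset.mem_erase.2 ⟨hq, q.2⟩⟩
        hpq
      simp only [hp, hq, dite_false, Fin.lt_def] at this ⊢
      omega

lemma card_lab_eq_zero (hm : m ∈ S) (hmin : ∀ q ∈ S, ¬ r m q) :
    Nat.card {D : DecLabeling r S // (D.lab ⟨m, hm⟩ : ℕ) = 0} =
      Nat.card (DecLabeling r (S.erase m)) :=
  Nat.card_congr
    { toFun := fun D => D.1.eraseZero hm D.2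
      invFun := fun E => ⟨E.insertZero hm hmin, by simp [insertZero]⟩
      left_inv := fun D => by
        refine Subtype.ext (DecLabeling.ext (funext fun p => Fin.ext ?_))
        by_cases hp : p.1 = m
        · obtain ⟨p, hpS⟩ := p
          subst hp
          simp [insertZero, D.2]
        · have := D.1.val_lab_pos hm D.2 p hp
          simp [insertZero, eraseZero, hp]
          omega
      right_inv := fun E => by
        refine DecLabeling.ext (funext fun p => Fin.ext ?_)
        simp [insertZero, eraseZero, Finset.ne_of_mem_erase p.2] }

/-- Decreasing labellings are counted by the element carrying the label `0`, which must be
`r`-minimal. -/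
theorem card_eq_sum_erase [DecidableRel r] (hS : S.Nonempty) :
    Nat.card (DecLabeling r S) =
      ∑ m ∈ S, if ∀ q ∈ S, ¬ r m q then Nat.card (DecLabeling r (S.erase m)) else 0 := by
  set zero : Fin S.card := ⟨0, Finset.card_pos.2 hS⟩
  let bottom (D : DecLabeling r S) : S := (Equiv.ofBijective D.lab D.bijective).symm zero
  have hbottom (D : DecLabeling r S) (m : S) : bottom D = m ↔ (D.lab m : ℕ) = 0 := by
    rw [Equiv.symm_apply_eq, Equiv.ofBijective_apply, Fin.ext_iff, eq_comm]
  rw [← Nat.card_congr (Equiv.sigmaFiberEquiv bottom), Nat.card_sigma, ← Finset.sum_coe_sort S]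
  refine Fintype.sum_congr _ _ fun m => ?_
  rw [Nat.card_congr (Equiv.subtypeEquivRight (hbottom · m))]
  split_ifs with hmin
  · exact card_lab_eq_zero m.2 hmin
  · simp only [not_forall, not_not] at hmin
    obtain ⟨q, hq, hmq⟩ := hmin
    exact card_lab_eq_zero_of_rel m.2 hq hmq

theorem card_image [DecidableEq β] {r' : β → β → Prop} {φ : α → β}
    (hφ : Function.Injective φ) (hr : ∀ p q, r' (φ p) (φ q) ↔ r p q) (S : Finset α) :
    Nat.card (DecLabeling r' (S.image φ)) = Nat.card (DecLabeling r S) := by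
  classical
  induction S using Finset.strongInduction with
  | H S ih =>
  rcases S.eq_empty_or_nonempty with rfl | hS
  · simp only [Finset.image_empty, card_empty]
  rw [card_eq_sum_erase hS, card_eq_sum_erase (hS.image φ), Finset.sum_image hφ.injOn]
  refine Finset.sum_congr rfl fun m hm => ?_
  simp only [Finset.forall_mem_image, hr, ← Finset.image_erase hφ,
    ih _ (Finset.erase_ssubset hm)]

theorem card_erase_of_forall_rel {a : α} (ha : ¬ r a a)
    (hroot : ∀ q ∈ S, q ≠ a → r a q ∧ ¬ r q a) :
    Nat.card (DecLabeling r (S.erase a)) = Nat.card (DecLabeling r S) := by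
  classical
  by_cases haS : a ∉ S
  · rw [Finset.erase_eq_of_notMem haS]
  rw [not_not] at haS
  induction S using Finset.strongInduction with
  | H S ih =>
  rcases (S.erase a).eq_empty_or_nonempty with he | hne
  · obtain rfl : S = {a} := (Finset.erase_eq_empty_iff S a).1 he |>.resolve_left
      (Finset.ne_empty_of_mem haS)
    rw [card_eq_sum_erase ⟨a, haS⟩, Finset.sum_singleton, if_pos (by simpa using ha)]
  obtain ⟨q, hq⟩ := hne
  have ha_not_min : ¬ ∀ q ∈ S, ¬ r a q := fun h => h q (Finset.mem_of_mem_erase hq)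
    (hroot q (Finset.mem_of_mem_erase hq) (Finset.ne_of_mem_erase hq)).1
  rw [card_eq_sum_erase ⟨q, hq⟩, card_eq_sum_erase ⟨a, haS⟩, ← Finset.add_sum_erase S _ haS,
    if_neg ha_not_min, zero_add]
  refine Finset.sum_congr rfl fun m hm => ?_
  have hma := Finset.ne_of_mem_erase hm
  have hmS := Finset.mem_of_mem_erase hm
  have hmin : (∀ q ∈ S.erase a, ¬ r m q) ↔ ∀ q ∈ S, ¬ r m q :=
    ⟨fun h q hq => if hqa : q = a then hqa ▸ (hroot m hmS hma).2
      else h q (Finset.mem_erase.2 ⟨hqa, hq⟩), fun h q hq => h q (Finset.mem_of_mem_erase hq)⟩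
  rw [if_congr hmin rfl rfl, Finset.erase_right_comm,
    ih _ (Finset.erase_ssubset hmS) (fun q hq hqa => hroot q (Finset.mem_of_mem_erase hq) hqa)
      (Finset.mem_erase.2 ⟨Ne.symm hma, haS⟩)]

theorem card_union {T U : Finset α} (hTU : Disjoint T U)
    (hind : ∀ p ∈ T, ∀ q ∈ U, ¬ r p q ∧ ¬ r q p) :
    Nat.card (DecLabeling r (T ∪ U)) =
      (T.card + U.card).choose U.card * Nat.card (DecLabeling r T) *
        Nat.card (DecLabeling r U) := by
  classical
  induction hn : T.card + U.card using Nat.strong_induction_on generalizing T U with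
  | _ n ih =>
  subst hn
  rcases T.eq_empty_or_nonempty with rfl | hT
  · simp
  rcases U.eq_empty_or_nonempty with rfl | hU
  · simp
  obtain ⟨t, ht⟩ : ∃ t, T.card = t + 1 := Nat.exists_eq_succ_of_ne_zero hT.card_pos.ne'
  obtain ⟨u, hu⟩ : ∃ u, U.card = u + 1 := Nat.exists_eq_succ_of_ne_zero hU.card_pos.ne'
  have hT_term : ∀ m ∈ T,
      (if ∀ q ∈ T ∪ U, ¬ r m q then Nat.card (DecLabeling r ((T ∪ U).erase m)) else 0) =
        (t + u + 1).choose (u + 1) *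
          (if ∀ q ∈ T, ¬ r m q then Nat.card (DecLabeling r (T.erase m)) else 0) *
          Nat.card (DecLabeling r U) := by
    intro m hm
    have hmin : (∀ q ∈ T ∪ U, ¬ r m q) ↔ ∀ q ∈ T, ¬ r m q := by
      rw [Finset.forall_mem_union]; exact and_iff_left fun q hq => (hind m hm q hq).1
    have hcard := Finset.card_erase_of_mem hm
    rw [if_congr hmin rfl rfl, Finset.erase_union_distrib,
      Finset.erase_eq_of_notMem (Finset.disjoint_left.1 hTU hm),
      ih _ (by omega) (hTU.mono_left (Finset.erase_subset m T))
        (fun p hp => hind p (Finset.mem_of_mem_erase hp)) rfl, hcard, hu, ht,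
      show t + 1 - 1 + (u + 1) = t + u + 1 by omega]
    split_ifs <;> ring
  have hU_term : ∀ m ∈ U,
      (if ∀ q ∈ T ∪ U, ¬ r m q then Nat.card (DecLabeling r ((T ∪ U).erase m)) else 0) =
        (t + u + 1).choose u * Nat.card (DecLabeling r T) *
          (if ∀ q ∈ U, ¬ r m q then Nat.card (DecLabeling r (U.erase m)) else 0) := by
    intro m hm
    have hmin : (∀ q ∈ T ∪ U, ¬ r m q) ↔ ∀ q ∈ U, ¬ r m q := by
      rw [Finset.forall_mem_union]; exact and_iff_right fun q hq => (hind q hq m hm).2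
    have hcard := Finset.card_erase_of_mem hm
    rw [if_congr hmin rfl rfl, Finset.erase_union_distrib,
      Finset.erase_eq_of_notMem (Finset.disjoint_right.1 hTU hm),
      ih _ (by omega) (hTU.mono_right (Finset.erase_subset m U))
        (fun p hp q hq => hind p hp q (Finset.mem_of_mem_erase hq)) rfl, hcard, hu, ht,
      show t + 1 + (u + 1 - 1) = t + u + 1 by omega, Nat.add_sub_cancel]
    split_ifs <;> ring
  rw [card_eq_sum_erase (hT.mono Finset.subset_union_left), Finset.sum_union hTU,
    Finset.sum_congr rfl hT_term, Finset.sum_congr rfl hU_term, ← Finset.sum_mul, ← Finset.mul_sum,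
    ← Finset.mul_sum, ← card_eq_sum_erase hT, ← card_eq_sum_erase hU, ht, hu,
    show t + 1 + (u + 1) = (t + u + 1) + 1 by omega, Nat.choose_succ_succ' (t + u + 1) u]
  ring

end DecLabeling

namespace List

variable {α : Type*}

def IsStrictPrefix_s2 (p q : List α) : Prop := p <+: q ∧ p ≠ q

lemma isStrictPrefix_cons_cons_iff {c : α} {p q : List α} :
    IsStrictPrefix_s2 (c :: p) (c :: q) ↔ IsStrictPrefix_s2 p q := by
  simp [IsStrictPrefix_s2, List.cons_prefix_cons]

lemma not_isStrictPrefix_cons_cons {c c' : α} (h : c ≠ c') (p q : List α) :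
    ¬ IsStrictPrefix_s2 (c :: p) (c' :: q) := by
  simp [IsStrictPrefix_s2, List.cons_prefix_cons, h]

lemma nil_isStrictPrefix_iff {q : List α} : IsStrictPrefix_s2 [] q ↔ q ≠ [] := by
  simp [IsStrictPrefix_s2, eq_comm]

lemma not_isStrictPrefix_nil_s2 (q : List α) : ¬ IsStrictPrefix_s2 q [] := by
  simp [IsStrictPrefix_s2, List.prefix_nil]

lemma getLast?_cons_eq_some_iff_s2 {c b : α} {q : List α} :
    (c :: q).getLast? = some b ↔ q.getLast? = some b ∨ (q = [] ∧ c = b) := by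
  cases q <;> simp [List.getLast?_cons]

end List

namespace Finset

variable {α : Type*} [DecidableEq α] {c c' : α}

lemma disjoint_image_cons (hc : c ≠ c') (X Y : Finset (List α)) :
    Disjoint (X.image (List.cons c)) (Y.image (List.cons c')) := by
  simp only [disjoint_left, mem_image]
  rintro _ ⟨p, -, rfl⟩ ⟨q, -, hq⟩
  exact hc (List.cons_eq_cons.1 hq).1.symm

lemma card_image_cons_union_image_cons (hc : c ≠ c') (X Y : Finset (List α)) :
    (X.image (List.cons c) ∪ Y.image (List.cons c')).card = X.card + Y.card := by
  rw [card_union_of_disjoint (disjoint_image_cons hc X Y),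
    card_image_of_injective _ List.cons_injective, card_image_of_injective _ List.cons_injective]

end Finset

open List (IsStrictPrefix_s2)

namespace DecLabeling

variable {α : Type*} [DecidableEq α]

theorem card_image_cons_union_image_cons {c c' : α} (hc : c ≠ c') (X Y : Finset (List α)) :
    Nat.card (DecLabeling IsStrictPrefix_s2 (X.image (List.cons c) ∪ Y.image (List.cons c'))) =
      (X.card + Y.card).choose Y.card * Nat.card (DecLabeling IsStrictPrefix_s2 X) *
        Nat.card (DecLabeling IsStrictPrefix_s2 Y) := by
  have hcons (c : α) := card_image (List.cons_injective (a := c))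
    (fun _ _ => List.isStrictPrefix_cons_cons_iff)
  rw [card_union (Finset.disjoint_image_cons hc X Y),
    Finset.card_image_of_injective _ List.cons_injective,
    Finset.card_image_of_injective _ List.cons_injective, hcons, hcons]
  simp only [Finset.mem_image]
  rintro _ ⟨p, -, rfl⟩ _ ⟨q, -, rfl⟩
  exact ⟨List.not_isStrictPrefix_cons_cons hc p q,
    List.not_isStrictPrefix_cons_cons hc.symm q p⟩

/-- The root `[]` is a strict prefix of every other position, so it always carries the largest
label. -/
theorem card_erase_nil (S : Finset (List α)) :
    Nat.card (DecLabeling IsStrictPrefix_s2 (S.erase [])) = Nat.card (DecLabeling IsStrictPrefix_s2 S) :=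
  card_erase_of_forall_rel (List.not_isStrictPrefix_nil_s2 []) fun q _ hq =>
    ⟨List.nil_isStrictPrefix_iff.2 hq, List.not_isStrictPrefix_nil_s2 q⟩

end DecLabeling

namespace BT

def childPos (b : Bool) (B : BT) : Finset (List Bool) :=
  B.positions.filter (·.getLast? = some b)

lemma leftPos_eq_childPos (B : BT) : leftPos B = childPos false B := rfl

lemma rightPos_eq_childPos (B : BT) : rightPos B = childPos true B := rfl

def numRoots (B : BT) : ℕ := if B = leaf then 0 else 1

@[simp] lemma leftPos_leaf : leftPos leaf = ∅ := rfl

@[simp] lemma rightPos_leaf : rightPos leaf = ∅ := rfl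

@[simp] lemma numRoots_leaf : leaf.numRoots = 0 := rfl

lemma numRoots_of_ne_leaf {B : BT} (h : B ≠ leaf) : B.numRoots = 1 := if_neg h

lemma nil_mem_positions {B : BT} : [] ∈ B.positions ↔ B ≠ leaf := by
  cases B <;> simp [positions]

lemma childPos_node (b : Bool) (L R : BT) :
    childPos b (node L R) =
      (L.positions.filter fun q => (false :: q).getLast? = some b).image (List.cons false) ∪
        (R.positions.filter fun q => (true :: q).getLast? = some b).image (List.cons true) := by
  simp [childPos, positions, Finset.filter_insert, Finset.filter_union, Finset.filter_image]

lemma filter_getLast?_cons_of_ne {c b : Bool} (h : c ≠ b) (B : BT) :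
    (B.positions.filter fun q => (c :: q).getLast? = some b) = childPos b B := by
  simp [childPos, List.getLast?_cons_eq_some_iff_s2, h]

lemma erase_nil_filter_getLast?_cons_self (b : Bool) (B : BT) :
    (B.positions.filter fun q => (b :: q).getLast? = some b).erase [] = childPos b B := by
  ext q
  by_cases hq : q = [] <;> simp [childPos, List.getLast?_cons_eq_some_iff_s2, hq]

lemma card_filter_getLast?_cons_self (b : Bool) (B : BT) :
    (B.positions.filter fun q => (b :: q).getLast? = some b).card =
      B.numRoots + (childPos b B).card := by
  rw [← erase_nil_filter_getLast?_cons_self]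
  by_cases hB : B = leaf
  · subst hB; rfl
  · rw [numRoots_of_ne_leaf hB]
    have hmem : [] ∈ B.positions.filter fun q => (b :: q).getLast? = some b := by
      simp [nil_mem_positions.2 hB]
    rw [Finset.card_erase_of_mem hmem]
    have := Finset.card_pos.2 ⟨_, hmem⟩
    omega

lemma card_leftPos_node (L R : BT) :
    (leftPos (node L R)).card = L.numRoots + (leftPos L).card + (leftPos R).card := by
  rw [leftPos_eq_childPos, childPos_node,
    Finset.card_image_cons_union_image_cons Bool.false_ne_true,
    card_filter_getLast?_cons_self, filter_getLast?_cons_of_ne Bool.false_ne_true.symm]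
  rfl

lemma card_rightPos_node (L R : BT) :
    (rightPos (node L R)).card =
      (rightPos L).card + (R.numRoots + (rightPos R).card) := by
  rw [rightPos_eq_childPos, childPos_node,
    Finset.card_image_cons_union_image_cons Bool.false_ne_true,
    card_filter_getLast?_cons_self, filter_getLast?_cons_of_ne Bool.false_ne_true]
  rfl

lemma card_decLabeling_filter_getLast?_cons_self (b : Bool) (B : BT) :
    Nat.card (DecLabeling IsStrictPrefix_s2 (B.positions.filter fun q => (b :: q).getLast? = some b)) =
      Nat.card (DecLabeling IsStrictPrefix_s2 (childPos b B)) := by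
  rw [← DecLabeling.card_erase_nil, erase_nil_filter_getLast?_cons_self]

lemma card_decLabeling_leftPos_node (L R : BT) :
    Nat.card (DecLabeling IsStrictPrefix_s2 (leftPos (node L R))) =
      (leftPos (node L R)).card.choose (leftPos R).card *
        Nat.card (DecLabeling IsStrictPrefix_s2 (leftPos L)) *
        Nat.card (DecLabeling IsStrictPrefix_s2 (leftPos R)) := by
  rw [leftPos_eq_childPos, childPos_node,
    Finset.card_image_cons_union_image_cons Bool.false_ne_true,
    DecLabeling.card_image_cons_union_image_cons Bool.false_ne_true,
    card_decLabeling_filter_getLast?_cons_self, filter_getLast?_cons_of_ne Bool.false_ne_true.symm]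
  rfl

lemma card_decLabeling_rightPos_node (L R : BT) :
    Nat.card (DecLabeling IsStrictPrefix_s2 (rightPos (node L R))) =
      (rightPos (node L R)).card.choose (rightPos L).card *
        Nat.card (DecLabeling IsStrictPrefix_s2 (rightPos L)) *
        Nat.card (DecLabeling IsStrictPrefix_s2 (rightPos R)) := by
  rw [rightPos_eq_childPos, childPos_node,
    Finset.card_image_cons_union_image_cons Bool.false_ne_true,
    DecLabeling.card_image_cons_union_image_cons Bool.false_ne_true,
    card_decLabeling_filter_getLast?_cons_self, filter_getLast?_cons_of_ne Bool.false_ne_true,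
    ← Nat.choose_symm_add]
  rfl

end BT

namespace NAT

open BT

def equivDecLabeling (B : BT) :
    NAT B ≃ DecLabeling IsStrictPrefix_s2 B.leftPos × DecLabeling IsStrictPrefix_s2 B.rightPos where
  toFun T := (⟨T.labL, T.bijL, fun p q h => T.ancL p q h.1 h.2⟩,
    ⟨T.labR, T.bijR, fun p q h => T.ancR p q h.1 h.2⟩)
  invFun D := ⟨D.1.lab, D.2.lab, D.1.bijective, D.2.bijective,
    fun p q h h' => D.1.lt_of_rel p q ⟨h, h'⟩, fun p q h h' => D.2.lt_of_rel p q ⟨h, h'⟩⟩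
  left_inv _ := rfl
  right_inv _ := rfl

lemma card_eq (B : BT) :
    Nat.card (NAT B) = Nat.card (DecLabeling IsStrictPrefix_s2 B.leftPos) *
      Nat.card (DecLabeling IsStrictPrefix_s2 B.rightPos) := by
  rw [Nat.card_congr (equivDecLabeling B), Nat.card_prod]

lemma card_leaf : Nat.card (NAT leaf) = 1 := by
  rw [card_eq]
  exact congrArg₂ (· * ·) DecLabeling.card_empty DecLabeling.card_empty

/-- The labels of `L` and `R` are shuffled, separately among left and among right children. -/
theorem card_node (L R : BT) :
    Nat.card (NAT (node L R)) =
      (leftPos (node L R)).card.choose (leftPos R).card *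
        (rightPos (node L R)).card.choose (rightPos L).card * Nat.card (NAT L) *
          Nat.card (NAT R) := by
  rw [card_eq, card_eq, card_eq, card_decLabeling_leftPos_node, card_decLabeling_rightPos_node]
  ring

end NAT

namespace BT

def treesUpTo : ℕ → Finset BT
  | 0 => {leaf}
  | n + 1 => insert leaf ((treesUpTo n ×ˢ treesUpTo n).image fun p => node p.1 p.2)

lemma leaf_mem_treesUpTo (n : ℕ) : leaf ∈ treesUpTo n := by
  cases n <;> simp [treesUpTo]

lemma mem_treesUpTo {B : BT} {n : ℕ} (h : (leftPos B).card + (rightPos B).card < n) :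
    B ∈ treesUpTo n := by
  induction n generalizing B with
  | zero => omega
  | succ n ih =>
    cases B with
    | leaf => exact leaf_mem_treesUpTo _
    | node L R =>
      rw [card_leftPos_node, card_rightPos_node] at h
      have mem (C : BT) (hC : C ≠ leaf → (leftPos C).card + (rightPos C).card < n) :
          C ∈ treesUpTo n := by
        by_cases hleaf : C = leaf
        · exact hleaf ▸ leaf_mem_treesUpTo n
        · exact ih (hC hleaf)
      refine Finset.mem_insert_of_mem (Finset.mem_image.2 ⟨(L, R), Finset.mem_product.2
        ⟨mem L fun hL => ?_, mem R fun hR => ?_⟩, rfl⟩)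
      · rw [numRoots_of_ne_leaf hL] at h; omega
      · rw [numRoots_of_ne_leaf hR] at h; omega

end BT

open BT

lemma natCount_eq_sum {i j : ℕ} (𝒮 : Finset BT)
    (h𝒮 : ∀ B, B ≠ leaf → (leftPos B).card + 1 = i → (rightPos B).card + 1 = j → B ∈ 𝒮) :
    natCount i j =
      ∑ B ∈ 𝒮 with B ≠ leaf ∧ (leftPos B).card + 1 = i ∧ (rightPos B).card + 1 = j,
        Nat.card (NAT B) := by
  classical
  rw [natCount, ← Finset.sum_coe_sort, ← Nat.card_sigma]
  exact Nat.card_congr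
    { toFun := fun T =>
        ⟨⟨T.1.1, Finset.mem_filter.2 ⟨h𝒮 _ T.2.1 T.2.2.1 T.2.2.2, T.2⟩⟩, T.1.2⟩
      invFun := fun T => ⟨⟨T.1.1, T.2⟩, (Finset.mem_filter.1 T.1.2).2⟩
      left_inv := fun _ => rfl
      right_inv := fun _ => rfl }

lemma natCount_zero_left (j : ℕ) : natCount 0 j = 0 := by
  simp [natCount_eq_sum ∅ fun _ _ h => absurd h (Nat.succ_ne_zero _)]

lemma natCount_zero_right (i : ℕ) : natCount i 0 = 0 := by
  simp [natCount_eq_sum ∅ fun _ _ _ h => absurd h (Nat.succ_ne_zero _)]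

/-- The number of non-ambiguous trees of geometric size `(i, j)`, the empty ones `∅_R` of size
`(1, 0)` and `∅_L` of size `(0, 1)` included. -/
noncomputable def natCountAll (i j : ℕ) : ℕ :=
  natCount i j + (if i = 1 ∧ j = 0 then 1 else 0) + (if i = 0 ∧ j = 1 then 1 else 0)

lemma natCountAll_add_one_right (a b : ℕ) :
    natCountAll a (b + 1) = natCount a (b + 1) + if a = 0 ∧ b = 0 then 1 else 0 := by
  simp [natCountAll]

lemma natCountAll_add_one_left (c d : ℕ) :
    natCountAll (c + 1) d = natCount (c + 1) d + if c = 0 ∧ d = 0 then 1 else 0 := by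
  simp [natCountAll]

/-- A left subtree `L` of `node L R`, read as `∅_L` when empty, has geometric size
`(L.numRoots + |LV L|, |RV L| + 1)`. -/
lemma sum_card_NAT_leftSubtree {a b n : ℕ} (h : a + b ≤ n) :
    ∑ L ∈ treesUpTo n with L.numRoots + (leftPos L).card = a ∧ (rightPos L).card = b,
      Nat.card (NAT L) = natCountAll a (b + 1) := by
  have hsplit (L : BT) :
      (if L.numRoots + (leftPos L).card = a ∧ (rightPos L).card = b then Nat.card (NAT L) else 0) =
        (if L = leaf then (if a = 0 ∧ b = 0 then 1 else 0) else 0) +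
          (if L ≠ leaf ∧ (leftPos L).card + 1 = a ∧ (rightPos L).card + 1 = b + 1
            then Nat.card (NAT L) else 0) := by
    by_cases hL : L = leaf
    · subst hL
      rw [NAT.card_leaf]
      simp [eq_comm]
    · simp only [numRoots_of_ne_leaf hL, hL, if_false, ne_eq, not_false_eq_true, true_and, zero_add,
        add_comm 1, Nat.add_right_cancel_iff]
  rw [Finset.sum_filter, Finset.sum_congr rfl fun L _ => hsplit L, Finset.sum_add_distrib,
    Finset.sum_ite_eq' _ _ _, if_pos (leaf_mem_treesUpTo n), ← Finset.sum_filter,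
    ← natCount_eq_sum _ fun B _ hl hr => mem_treesUpTo (by omega), natCountAll_add_one_right,
    add_comm]

/-- A right subtree `R` of `node L R`, read as `∅_R` when empty, has geometric size
`(|LV R| + 1, R.numRoots + |RV R|)`. -/
lemma sum_card_NAT_rightSubtree {c d n : ℕ} (h : c + d ≤ n) :
    ∑ R ∈ treesUpTo n with (leftPos R).card = c ∧ R.numRoots + (rightPos R).card = d,
      Nat.card (NAT R) = natCountAll (c + 1) d := by
  have hsplit (R : BT) :
      (if (leftPos R).card = c ∧ R.numRoots + (rightPos R).card = d then Nat.card (NAT R) else 0) =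
        (if R = leaf then (if c = 0 ∧ d = 0 then 1 else 0) else 0) +
          (if R ≠ leaf ∧ (leftPos R).card + 1 = c + 1 ∧ (rightPos R).card + 1 = d
            then Nat.card (NAT R) else 0) := by
    by_cases hR : R = leaf
    · subst hR
      rw [NAT.card_leaf]
      simp [eq_comm]
    · simp only [numRoots_of_ne_leaf hR, hR, if_false, ne_eq, not_false_eq_true, true_and, zero_add,
        add_comm 1, Nat.add_right_cancel_iff]
  rw [Finset.sum_filter, Finset.sum_congr rfl fun R _ => hsplit R, Finset.sum_add_distrib,
    Finset.sum_ite_eq' _ _ _, if_pos (leaf_mem_treesUpTo n), ← Finset.sum_filter,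
    ← natCount_eq_sum _ fun B _ hl hr => mem_treesUpTo (by omega), natCountAll_add_one_left,
    add_comm]

lemma natCount_add_one_add_one_eq_sum_node (i j : ℕ) :
    natCount (i + 1) (j + 1) =
      ∑ p ∈ treesUpTo (i + j) ×ˢ treesUpTo (i + j) with
        (leftPos (node p.1 p.2)).card = i ∧ (rightPos (node p.1 p.2)).card = j,
        Nat.card (NAT (node p.1 p.2)) := by
  rw [natCount_eq_sum (treesUpTo (i + j + 1)) fun B _ hl hr => mem_treesUpTo (by omega),
    treesUpTo, Finset.filter_insert, if_neg (by simp), Finset.filter_image,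
    Finset.sum_image fun p _ q _ h => Prod.ext (node.inj h).1 (node.inj h).2]
  simp only [ne_eq, reduceCtorEq, not_false_eq_true, Nat.add_right_cancel_iff, true_and]

open Finset in
theorem natCount_add_one_add_one (i j : ℕ) :
    natCount (i + 1) (j + 1) =
      ∑ ac ∈ antidiagonal i, ∑ bd ∈ antidiagonal j,
        i.choose ac.1 * j.choose bd.1 * natCountAll ac.1 (bd.1 + 1) *
          natCountAll (ac.2 + 1) bd.2 := by
  set 𝒯 := treesUpTo (i + j)
  let sizes (p : BT × BT) : (ℕ × ℕ) × (ℕ × ℕ) :=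
    ((p.1.numRoots + (leftPos p.1).card, (leftPos p.2).card),
      ((rightPos p.1).card, p.2.numRoots + (rightPos p.2).card))
  have hsizes : ∀ p ∈ {p ∈ 𝒯 ×ˢ 𝒯 |
      (leftPos (node p.1 p.2)).card = i ∧ (rightPos (node p.1 p.2)).card = j},
      sizes p ∈ antidiagonal i ×ˢ antidiagonal j := by
    rintro ⟨L, R⟩ hp
    simp only [mem_filter, card_leftPos_node, card_rightPos_node] at hp
    simp only [mem_product, HasAntidiagonal.mem_antidiagonal, sizes]
    omega
  rw [natCount_add_one_add_one_eq_sum_node, ← sum_fiberwise_of_maps_to hsizes, sum_product]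
  refine sum_congr rfl fun ac hac => sum_congr rfl fun bd hbd => ?_
  rw [HasAntidiagonal.mem_antidiagonal] at hac hbd
  have hfiber : {p ∈ {p ∈ 𝒯 ×ˢ 𝒯 | (leftPos (node p.1 p.2)).card = i ∧
      (rightPos (node p.1 p.2)).card = j} | sizes p = (ac, bd)} =
        {L ∈ 𝒯 | L.numRoots + (leftPos L).card = ac.1 ∧ (rightPos L).card = bd.1} ×ˢ
          {R ∈ 𝒯 | (leftPos R).card = ac.2 ∧ R.numRoots + (rightPos R).card = bd.2} := by
    ext ⟨L, R⟩
    simp only [mem_filter, mem_product, card_leftPos_node, card_rightPos_node, sizes,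
      Prod.ext_iff]
    constructor
    · rintro ⟨⟨⟨hL, hR⟩, -⟩, h⟩
      exact ⟨⟨hL, by omega, by omega⟩, hR, by omega, by omega⟩
    · rintro ⟨⟨hL, h1⟩, ⟨hR, h2⟩⟩
      exact ⟨⟨⟨hL, hR⟩, by omega, by omega⟩, by omega⟩
  rw [hfiber, sum_product]
  refine (sum_congr rfl fun L hL => sum_congr rfl fun R hR => (?_ : _ =
    i.choose ac.1 * j.choose bd.1 * (Nat.card (NAT L) * Nat.card (NAT R)))).trans ?_
  · rw [mem_filter] at hL hR
    rw [NAT.card_node, card_leftPos_node, card_rightPos_node, hL.2.1, hL.2.2, hR.2.1, hR.2.2,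
      ← hac, ← hbd, ← Nat.choose_symm_add]
    ring
  simp only [← mul_sum, ← sum_mul]
  rw [sum_card_NAT_leftSubtree (by omega), sum_card_NAT_rightSubtree (by omega)]
  ring

lemma Finsupp.eq_iff_fin_two {M : Type*} [Zero M] {d e : Fin 2 →₀ M} :
    d = e ↔ d 0 = e 0 ∧ d 1 = e 1 := by
  rw [Finsupp.ext_iff, Fin.forall_fin_two]

open Finset in
lemma Finset.sum_antidiagonal_fin_two {M : Type*} [AddCommMonoid M] (d : Fin 2 →₀ ℕ)
    (F : ℕ → ℕ → ℕ → ℕ → M) :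
    ∑ p ∈ antidiagonal d, F (p.1 0) (p.1 1) (p.2 0) (p.2 1) =
      ∑ ac ∈ antidiagonal (d 0), ∑ bd ∈ antidiagonal (d 1), F ac.1 bd.1 ac.2 bd.2 := by
  rw [← sum_product']
  refine sum_nbij' (fun p => ((p.1 0, p.2 0), (p.1 1, p.2 1)))
    (fun x => (Finsupp.single 0 x.1.1 + Finsupp.single 1 x.2.1,
      Finsupp.single 0 x.1.2 + Finsupp.single 1 x.2.2)) ?_ ?_ ?_ ?_ ?_ <;>
    simp [HasAntidiagonal.mem_antidiagonal, Finsupp.eq_iff_fin_two]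

/-- The doubly exponential generating series `∑ c i j x^i y^j / (i! j!)`. -/
noncomputable def egf (c : ℕ → ℕ → ℚ) : MvPowerSeries (Fin 2) ℚ :=
  fun d => c (d 0) (d 1) / ((d 0).factorial * (d 1).factorial)

section egf

open Finset

variable (c c' : ℕ → ℕ → ℚ)

lemma egf_add : egf c + egf c' = egf fun i j => c i j + c' i j := by
  funext d
  exact (add_div _ _ _).symm

lemma one_eq_egf :
    (1 : MvPowerSeries (Fin 2) ℚ) = egf fun i j => if i = 0 ∧ j = 0 then 1 else 0 := by
  funext d
  change MvPowerSeries.coeff d 1 = _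
  rw [MvPowerSeries.coeff_one, egf]
  simp only [Finsupp.eq_iff_fin_two, Finsupp.coe_zero, Pi.zero_apply]
  split_ifs with h <;> simp [h]

lemma X_zero_eq_egf :
    (MvPowerSeries.X 0 : MvPowerSeries (Fin 2) ℚ) =
      egf fun i j => if i = 1 ∧ j = 0 then 1 else 0 := by
  funext d
  change MvPowerSeries.coeff d (MvPowerSeries.X 0) = _
  rw [MvPowerSeries.coeff_X, egf]
  simp only [Finsupp.eq_iff_fin_two, Finsupp.single_eq_same, Finsupp.single_eq_of_ne one_ne_zero]
  split_ifs with h <;> simp [h]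

lemma X_one_eq_egf :
    (MvPowerSeries.X 1 : MvPowerSeries (Fin 2) ℚ) =
      egf fun i j => if i = 0 ∧ j = 1 then 1 else 0 := by
  funext d
  change MvPowerSeries.coeff d (MvPowerSeries.X 1) = _
  rw [MvPowerSeries.coeff_X, egf]
  simp only [Finsupp.eq_iff_fin_two, Finsupp.single_eq_same, Finsupp.single_eq_of_ne zero_ne_one]
  split_ifs with h <;> simp [h]

lemma dX_egf : dX (egf c) = egf fun i j => c (i + 1) j := by
  funext d
  simp only [dX, egf, Finsupp.add_apply, Finsupp.single_eq_same,
    Finsupp.single_eq_of_ne one_ne_zero, add_zero, Nat.factorial_succ, Nat.cast_mul, Nat.cast_succ]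
  field_simp

lemma dY_egf : dY (egf c) = egf fun i j => c i (j + 1) := by
  funext d
  simp only [dY, egf, Finsupp.add_apply, Finsupp.single_eq_same,
    Finsupp.single_eq_of_ne zero_ne_one, add_zero, Nat.factorial_succ, Nat.cast_mul, Nat.cast_succ]
  field_simp

lemma iX_egf : iX (egf fun i j => c (i + 1) j) = egf fun i j => if i = 0 then 0 else c i j := by
  funext d
  simp only [iX, egf]
  split_ifs with h
  · rw [zero_div]
  obtain ⟨k, hk⟩ : ∃ k, d 0 = k + 1 := ⟨d 0 - 1, by omega⟩
  simp only [Finsupp.tsub_apply, Finsupp.single_eq_same, Finsupp.single_eq_of_ne one_ne_zero,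
    Nat.sub_zero, hk, Nat.add_sub_cancel, Nat.factorial_succ, Nat.cast_mul, Nat.cast_succ]
  field_simp

lemma iY_egf : iY (egf fun i j => c i (j + 1)) = egf fun i j => if j = 0 then 0 else c i j := by
  funext d
  simp only [iY, egf]
  split_ifs with h
  · rw [zero_div]
  obtain ⟨k, hk⟩ : ∃ k, d 1 = k + 1 := ⟨d 1 - 1, by omega⟩
  simp only [Finsupp.tsub_apply, Finsupp.single_eq_same, Finsupp.single_eq_of_ne zero_ne_one,
    Nat.sub_zero, hk, Nat.add_sub_cancel, Nat.factorial_succ, Nat.cast_mul, Nat.cast_succ]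
  field_simp

lemma egf_mul :
    egf c * egf c' = egf fun i j => ∑ ac ∈ antidiagonal i, ∑ bd ∈ antidiagonal j,
      (i.choose ac.1 * j.choose bd.1 : ℚ) * c ac.1 bd.1 * c' ac.2 bd.2 := by
  funext d
  change MvPowerSeries.coeff d (egf c * egf c') = _
  rw [MvPowerSeries.coeff_mul]
  simp only [MvPowerSeries.coeff_apply, egf]
  rw [sum_antidiagonal_fin_two d fun a b a' b' =>
    c a b / (a.factorial * b.factorial) * (c' a' b' / (a'.factorial * b'.factorial)), sum_div]
  refine sum_congr rfl fun ac hac => ?_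
  rw [sum_div]
  refine sum_congr rfl fun bd hbd => ?_
  rw [HasAntidiagonal.mem_antidiagonal] at hac hbd
  rw [← hac, ← hbd, Nat.cast_choose ℚ (Nat.le_add_right _ _),
    Nat.cast_choose ℚ (Nat.le_add_right _ _), Nat.add_sub_cancel_left, Nat.add_sub_cancel_left]
  field_simp

end egf

lemma natCountAll_zero_left (j : ℕ) : natCountAll 0 j = if j = 1 then 1 else 0 := by
  simp [natCountAll, natCount_zero_left]

lemma natCountAll_zero_right (i : ℕ) : natCountAll i 0 = if i = 1 then 1 else 0 := by
  simp [natCountAll, natCount_zero_right]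

lemma natCountAll_add_one_add_one (i j : ℕ) :
    natCountAll (i + 1) (j + 1) = natCount (i + 1) (j + 1) := by
  simp [natCountAll]

lemma LGFN_eq_egf : LGFN = egf fun i j => (natCountAll i j : ℚ) := by
  funext d
  simp only [LGFN, egf, natCountAll, Nat.cast_add, Nat.cast_ite, Nat.cast_one, Nat.cast_zero,
    add_div]
  split_ifs <;> simp_all [add_comm]

lemma GFN_eq_egf : GFN = egf fun i j => (natCountAll (i + 1) (j + 1) : ℚ) := by
  funext d
  simp only [GFN, egf, natCountAll_add_one_add_one]

theorem GFN_eq_dX_mul_dY : GFN = dX LGFN * dY LGFN := by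
  rw [GFN_eq_egf, LGFN_eq_egf, dX_egf, dY_egf, mul_comm, egf_mul]
  congr 1
  funext i j
  rw [natCountAll_add_one_add_one, natCount_add_one_add_one]
  push_cast
  rfl

lemma dY_LGFN : dY LGFN = 1 + iX GFN := by
  rw [LGFN_eq_egf, GFN_eq_egf, dY_egf, iX_egf (fun i j => (natCountAll i (j + 1) : ℚ)),
    one_eq_egf, egf_add]
  congr 1
  funext i j
  cases i <;> simp [natCountAll_zero_left]

lemma dX_LGFN : dX LGFN = 1 + iY GFN := by
  rw [LGFN_eq_egf, GFN_eq_egf, dX_egf, iY_egf (fun i j => (natCountAll (i + 1) j : ℚ)),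
    one_eq_egf, egf_add]
  congr 1
  funext i j
  cases j <;> simp [natCountAll_zero_right]

lemma LGFN_eq_X_add_X_add_iX_iY_GFN :
    LGFN = MvPowerSeries.X 1 + MvPowerSeries.X 0 + iX (iY GFN) := by
  rw [LGFN_eq_egf, GFN_eq_egf, iY_egf (fun i j => (natCountAll (i + 1) j : ℚ)),
    iX_egf (fun i j => if j = 0 then 0 else (natCountAll i j : ℚ)), X_one_eq_egf, X_zero_eq_egf,
    egf_add, egf_add]
  congr 1
  funext i j
  rcases i with _ | i <;> rcases j with _ | j <;>
    simp [natCountAll_zero_left, natCountAll_zero_right]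

/-- The generating functions of non-ambiguous trees satisfy the
fixed-point differential equations
`LGFN = y + x + ∫ₓ∫_y ∂ₓLGFN · ∂_yLGFN` and
`GFN = (1 + ∫ₓ GFN)(1 + ∫_y GFN)`. -/
theorem stmt2 :
    LGFN = MvPowerSeries.X 1 + MvPowerSeries.X 0 + iX (iY (dX LGFN * dY LGFN)) ∧
    GFN = (1 + iX GFN) * (1 + iY GFN) := by
  rw [← GFN_eq_dX_mul_dY, ← dX_LGFN, ← dY_LGFN, mul_comm]
  exact ⟨LGFN_eq_X_add_X_add_iX_iY_GFN, GFN_eq_dX_mul_dY⟩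
end

section
/- For permutations τ ∈ S_m and π ∈ S_n, the sum of q^{iMaj(θ)} over all permutations θ ∈ S_{m+n+1} such that, writing θ as the concatenation uv where u is its first m+1 letters and v its last n letters, the standardization of u equals τ with the letter m+1 appended at the end, and the standardization of v equals π, is equal to q^{iMaj(τ)+iMaj(π)} times the Gaussian binomial coefficient C(m+n+1, m+1)_q, as polynomials in q. -/
/-- The number of inversions of a word `w` (a list of distinct naturals): the number
of pairs of positions `i < j` with `w_i > w_j`. -/
def invWord (w : List ℕ) : ℕ :=
  ((Finset.range w.length ×ˢ Finset.range w.length).filter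
    (fun q : ℕ × ℕ => q.1 < q.2 ∧ w.getD q.2 0 < w.getD q.1 0)).card

/-- The inverse major index of a permutation word `w` of `{1,…,n}`: the sum of the
descents of the inverse permutation, i.e. the sum of the values `i ∈ {1,…,n-1}` such
that `i+1` occurs before `i` in `w`. -/
def imajWord (w : List ℕ) : ℕ :=
  ∑ k ∈ Finset.range w.length,
    if w.idxOf (k + 2) < w.idxOf (k + 1) then k + 1 else 0


/-- The standardization of a word `w` of distinct letters: each letter is replaced by
its (1-based) rank among the letters of `w`. -/
def stdWord (w : List ℕ) : List ℕ :=
  w.map (fun a => (w.filter (fun b => b < a)).length + 1)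

/-- The permutations of `{1,…,n}`, as words (lists of values). -/
def permWords (n : ℕ) : Finset (List ℕ) := ((List.range' 1 n).permutations).toFinset

/-- The `q`-integer `[n]_q = 1 + q + ⋯ + q^{n-1}` in `ℚ(q)`. -/
noncomputable def qInt (n : ℕ) : RatFunc ℚ := ∑ k ∈ Finset.range n, RatFunc.X ^ k

/-- The `q`-factorial `[n]_q! = [1]_q [2]_q ⋯ [n]_q` in `ℚ(q)`. -/
noncomputable def qFact (n : ℕ) : RatFunc ℚ := ∏ k ∈ Finset.range n, qInt (k + 1)

/-- The Gaussian binomial coefficient `C(a,b)_q = [a]_q!/([b]_q! [a-b]_q!)` in `ℚ(q)`. -/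
noncomputable def gaussBinom (a b : ℕ) : RatFunc ℚ := qFact a / (qFact b * qFact (a - b))

/-!
A permutation `θ = uv ∈ S_N` with `std u = σ ∈ S_a` and `std v = π ∈ S_b` is determined by the set
`S` of letters of `u`, and whether `i + 1` precedes `i` in `θ` depends only on `S`, `σ` and `π`:
if exactly one of `i`, `i + 1` lies in `S` it does iff `i + 1 ∈ S`, and otherwise iff `σ⁻¹`
(resp. `π⁻¹`) has a descent at the rank of `i` in `S` (resp. in its complement). So the sum runs
over the `a`-subsets of `{1, …, N}`. It is computed by induction on `N`, with the descent sets of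
`σ⁻¹` and `π⁻¹` replaced by arbitrary predicates `δ₁`, `δ₂`, and `imaj σ + imaj π` by the sum `c`
of the `i < a` with `δ₁ i` and the `i < b` with `δ₂ i`. Deleting `N` only forgets the possible
descent at `N - 1`, so the sets containing `N` and the others are followed separately: they
contribute `q^(c + b) C(N-1, a-1)_q` and `q^c C(N-1, a)_q`, and the two `q`-Pascal recurrences
carry these closed forms from `N` to `N + 1`.
-/

open Finset

lemma List.idxOf_map_of_injOn {α β : Type*} [DecidableEq α] [DecidableEq β] {f : α → β}
    {l : List α} {x : α} (hf : ∀ y ∈ l, f y = f x → y = x) : (l.map f).idxOf (f x) = l.idxOf x := by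
  induction l with
  | nil => rfl
  | cons y l ih =>
    by_cases hyx : y = x
    · simp [hyx]
    · rw [List.map_cons, List.idxOf_cons_ne _ fun h => hyx (hf y List.mem_cons_self h),
        List.idxOf_cons_ne _ hyx, ih fun z hz => hf z (List.mem_cons_of_mem _ hz)]

namespace IMajShuffle

section QBinomial

variable {R : Type*} [CommSemiring R] (q : R)

/-- The `q`-binomial coefficient, defined by the `q`-Pascal rule so that it vanishes for `k > n`
(where `gaussBinom`, through truncated subtraction, does not). -/
def qBinomial : ℕ → ℕ → R
  | _, 0 => 1
  | 0, _ + 1 => 0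
  | n + 1, k + 1 => qBinomial n k + q ^ (k + 1) * qBinomial n (k + 1)

@[simp] lemma qBinomial_zero_right (n : ℕ) : qBinomial q n 0 = 1 := by
  cases n <;> rfl

lemma qBinomial_succ_succ (n k : ℕ) :
    qBinomial q (n + 1) (k + 1) = qBinomial q n k + q ^ (k + 1) * qBinomial q n (k + 1) := rfl

lemma qBinomial_eq_zero_of_lt {n k : ℕ} (h : n < k) : qBinomial q n k = 0 := by
  induction n generalizing k with
  | zero => obtain ⟨k, rfl⟩ := Nat.exists_eq_succ_of_ne_zero h.ne'; rfl
  | succ n ih =>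
    obtain ⟨k, rfl⟩ := Nat.exists_eq_succ_of_ne_zero (Nat.ne_zero_of_lt h)
    rw [qBinomial_succ_succ, ih (by omega), ih (by omega), mul_zero, add_zero]

lemma qBinomial_succ_succ' (n k : ℕ) :
    qBinomial q (n + 1) (k + 1) = q ^ (n - k) * qBinomial q n k + qBinomial q n (k + 1) := by
  induction n generalizing k with
  | zero =>
    cases k <;> simp [qBinomial_succ_succ, qBinomial_eq_zero_of_lt]
  | succ n ih =>
    rcases k with _ | k
    · rw [qBinomial_succ_succ q n 0, qBinomial_succ_succ q (n + 1) 0, ih 0]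
      simp only [qBinomial_zero_right, Nat.sub_zero]
      ring
    rw [qBinomial_succ_succ q n k, qBinomial_succ_succ q n (k + 1),
      qBinomial_succ_succ q (n + 1) (k + 1), ih k, ih (k + 1)]
    rcases lt_or_ge n (k + 1) with hnk | hkn
    · simp [qBinomial_eq_zero_of_lt q hnk, qBinomial_eq_zero_of_lt q (show n < k + 2 by omega)]
    · obtain ⟨d, rfl⟩ := Nat.exists_eq_add_of_le hkn
      rw [show k + 1 + d + 1 - (k + 1) = d + 1 by omega, show k + 1 + d - (k + 1) = d by omega,
        show k + 1 + d - k = d + 1 by omega]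
      ring

end QBinomial

section GaussBinom

lemma qInt_add (a b : ℕ) : qInt (a + b) = qInt a + RatFunc.X ^ a * qInt b := by
  simp only [qInt, sum_range_add, pow_add, mul_sum]

lemma qInt_ne_zero {n : ℕ} (hn : n ≠ 0) : qInt n ≠ 0 := by
  have h : qInt n = algebraMap (Polynomial ℚ) (RatFunc ℚ) (∑ k ∈ range n, Polynomial.X ^ k) := by
    simp [qInt, RatFunc.algebraMap_X]
  rw [h, map_ne_zero_iff _ (RatFunc.algebraMap_injective ℚ)]
  intro h0
  exact hn (by simpa [Polynomial.eval_finsetSum] using congrArg (Polynomial.eval 1) h0)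

@[simp] lemma qFact_zero : qFact 0 = 1 := prod_range_zero _

lemma qFact_succ (n : ℕ) : qFact (n + 1) = qFact n * qInt (n + 1) :=
  prod_range_succ _ _

lemma qFact_ne_zero (n : ℕ) : qFact n ≠ 0 :=
  prod_ne_zero_iff.mpr fun k _ => qInt_ne_zero k.succ_ne_zero

lemma qBinomial_mul_qFact_mul_qFact {n k : ℕ} (h : k ≤ n) :
    qBinomial RatFunc.X n k * (qFact k * qFact (n - k)) = qFact n := by
  induction n generalizing k with
  | zero => obtain rfl := Nat.le_zero.mp h; simp [qFact]
  | succ n ih =>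
    rcases k with _ | k
    · simp [qFact]
    rw [qBinomial_succ_succ]
    rcases (Nat.lt_succ_iff.mp h).lt_or_eq with hk | rfl
    · obtain ⟨d, rfl⟩ := Nat.exists_eq_add_of_lt hk
      have e1 := ih (k := k) (by omega)
      have e2 := ih (k := k + 1) (by omega)
      rw [show k + d + 1 - k = d + 1 by omega, qFact_succ d] at e1
      rw [show k + d + 1 - (k + 1) = d by omega, qFact_succ k] at e2
      have hadd : qInt (k + d + 1 + 1) = qInt (k + 1) + RatFunc.X ^ (k + 1) * qInt (d + 1) := by
        rw [← qInt_add, show k + 1 + (d + 1) = k + d + 1 + 1 by omega]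
      rw [show k + d + 1 + 1 - (k + 1) = d + 1 by omega, qFact_succ (k + d + 1), qFact_succ k,
        qFact_succ d]
      linear_combination qInt (k + 1) * e1 + RatFunc.X ^ (k + 1) * qInt (d + 1) * e2 -
        qFact (k + d + 1) * hadd
    · have hkk : qBinomial (RatFunc.X : RatFunc ℚ) k k = 1 := by
        simpa [qFact_ne_zero k] using ih le_rfl
      simp [hkk, qBinomial_eq_zero_of_lt _ (Nat.lt_succ_self k)]

lemma gaussBinom_eq_qBinomial {n k : ℕ} (h : k ≤ n) : gaussBinom n k = qBinomial RatFunc.X n k := by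
  rw [gaussBinom, div_eq_iff (mul_ne_zero (qFact_ne_zero _) (qFact_ne_zero _)),
    qBinomial_mul_qFact_mul_qFact h]

end GaussBinom

section Rank

def rank (S : Finset ℕ) (x : ℕ) : ℕ := #{y ∈ S | y ≤ x}

variable {S T : Finset ℕ}

lemma rank_insert_of_lt {a x : ℕ} (h : x < a) : rank (insert a S) x = rank S x := by
  rw [rank, rank, filter_insert, if_neg (by omega)]

lemma rank_eq_card {N x : ℕ} (hS : S ⊆ Icc 1 N) (h : N ≤ x) : rank S x = #S := by
  rw [rank, filter_true_of_mem fun y hy => ((mem_Icc.mp (hS hy)).2.trans h)]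

lemma rank_succ (x : ℕ) : rank S (x + 1) = rank S x + if x + 1 ∈ S then 1 else 0 := by
  have : {y ∈ S | y ≤ x + 1} = {y ∈ S | y ≤ x} ∪ {y ∈ S | y = x + 1} := by
    rw [← filter_or]; exact filter_congr fun y _ => by omega
  rw [rank, rank, this, card_union_of_disjoint (disjoint_filter.mpr fun _ _ _ => by omega),
    filter_eq']
  split_ifs <;> simp

lemma rank_eq_card_lt_add_one {x : ℕ} (hx : x ∈ S) :
    rank S x = #{y ∈ S | y < x} + 1 := by
  have : {y ∈ S | y ≤ x} = insert x {y ∈ S | y < x} := by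
    ext y
    simp only [mem_filter, mem_insert]
    constructor
    · rintro ⟨hy, hyx⟩
      exact hyx.lt_or_eq.elim (fun h => Or.inr ⟨hy, h⟩) Or.inl
    · rintro (rfl | ⟨hy, hyx⟩)
      exacts [⟨hx, le_rfl⟩, ⟨hy, hyx.le⟩]
  rw [rank, this, card_insert_of_notMem (by simp)]

lemma rank_union (h : Disjoint S T) (x : ℕ) : rank (S ∪ T) x = rank S x + rank T x := by
  rw [rank, filter_union, card_union_of_disjoint (disjoint_filter_filter h), rank, rank]

lemma rank_Icc_one {N x : ℕ} (h : x ≤ N) : rank (Icc 1 N) x = x := by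
  rw [rank, show {y ∈ Icc 1 N | y ≤ x} = Icc 1 x by
    ext; simp only [mem_filter, mem_Icc]; omega, Nat.card_Icc]; omega

lemma rank_lt_rank {x y : ℕ} (hy : y ∈ S) (h : x < y) : rank S x < rank S y :=
  card_lt_card <| (ssubset_iff_of_subset <|
    monotone_filter_right S fun _ _ (hz : _ ≤ x) => hz.trans h.le).mpr
      ⟨y, mem_filter.mpr ⟨hy, le_rfl⟩, fun hy' => by have := (mem_filter.mp hy').2; omega⟩

lemma rank_injOn : Set.InjOn (rank S) S := fun x hx y hy h => by
  by_contra hne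
  rcases lt_or_gt_of_ne hne with hxy | hxy
  · exact (rank_lt_rank hy hxy).ne h
  · exact (rank_lt_rank hx hxy).ne' h

lemma image_rank : S.image (rank S) = Icc 1 #S := by
  refine eq_of_subset_of_card_le (fun r hr => ?_) ?_
  · obtain ⟨x, hx, rfl⟩ := mem_image.mp hr
    exact mem_Icc.mpr ⟨card_pos.mpr ⟨x, mem_filter.mpr ⟨hx, le_rfl⟩⟩,
      card_le_card (filter_subset _ _)⟩
  · rw [card_image_of_injOn rank_injOn, Nat.card_Icc, Nat.add_sub_cancel]

noncomputable def unrank (S : Finset ℕ) : ℕ → ℕ := Function.invFunOn (rank S) S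

lemma unrank_rank {x : ℕ} (hx : x ∈ S) : unrank S (rank S x) = x :=
  rank_injOn.leftInvOn_invFunOn hx

lemma exists_rank_eq {r : ℕ} (hr : r ∈ Icc 1 #S) : ∃ x ∈ (S : Set ℕ), rank S x = r := by
  rw [← image_rank] at hr
  simpa using hr

lemma unrank_mem {r : ℕ} (hr : r ∈ Icc 1 #S) : unrank S r ∈ S :=
  Function.invFunOn_mem (exists_rank_eq hr)

lemma rank_unrank {r : ℕ} (hr : r ∈ Icc 1 #S) : rank S (unrank S r) = r :=
  Function.invFunOn_eq (exists_rank_eq hr)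

end Rank

lemma sum_powersetCard_Icc_succ {M : Type*} [AddCommMonoid M] (f : Finset ℕ → M) (N k : ℕ) :
    ∑ S ∈ powersetCard (k + 1) (Icc 1 (N + 1)), f S =
      ∑ S ∈ powersetCard (k + 1) (Icc 1 N), f S +
        ∑ S ∈ powersetCard k (Icc 1 N), f (insert (N + 1) S) := by
  have hN : N + 1 ∉ Icc 1 N := by simp
  rw [← insert_Icc_right_eq_Icc_add_one (by omega), powersetCard_succ_insert hN,
    sum_union, sum_image]
  · intro S hS T hT h
    rw [← erase_insert (notMem_mono (mem_powersetCard.mp hS).1 hN),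
      ← erase_insert (notMem_mono (mem_powersetCard.mp hT).1 hN), h]
  · refine disjoint_left.mpr fun S hS hS' => ?_
    obtain ⟨T, -, rfl⟩ := mem_image.mp hS'
    exact hN ((mem_powersetCard.mp hS).1 (mem_insert_self _ _))

section ShuffleDescent

def descWeight (p : ℕ → Prop) [DecidablePred p] (k : ℕ) : ℕ :=
  ∑ i ∈ range k, if p i then i else 0

lemma descWeight_succ (p : ℕ → Prop) [DecidablePred p] (k : ℕ) :
    descWeight p (k + 1) = descWeight p k + if p k then k else 0 :=
  sum_range_succ _ _

@[simp] lemma descWeight_zero (p : ℕ → Prop) [DecidablePred p] : descWeight p 0 = 0 := rfl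

@[simp] lemma descWeight_one (p : ℕ → Prop) [DecidablePred p] : descWeight p 1 = 0 := by
  simp [descWeight]

lemma descWeight_congr {p p' : ℕ → Prop} [DecidablePred p] [DecidablePred p'] {k : ℕ}
    (h : ∀ i, 0 < i → i < k → (p i ↔ p' i)) : descWeight p k = descWeight p' k := by
  refine sum_congr rfl fun i hi => ?_
  rcases i.eq_zero_or_pos with rfl | hi0
  · simp
  · simp only [h i hi0 (mem_range.mp hi)]

variable (δ₁ δ₂ : ℕ → Prop) [DecidablePred δ₁] [DecidablePred δ₂]

/-- Whether `i + 1` precedes `i` in a word `uv` whose prefix `u` has letter set `S`, when `δ₁`, `δ₂`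
are the inverse descents of `std u`, `std v` (`isInvDescent_append_iff`); for `i ∉ S`,
`i - rank S i` is the rank of `i` in the complement of `S`. -/
def IsShuffleDescent (S : Finset ℕ) (i : ℕ) : Prop :=
  if i + 1 ∈ S then (i ∈ S → δ₁ (rank S i)) else (i ∉ S ∧ δ₂ (i - rank S i))

instance (S : Finset ℕ) : DecidablePred (IsShuffleDescent δ₁ δ₂ S) := fun i => by
  unfold IsShuffleDescent; infer_instance

variable {δ₁ δ₂}

lemma descWeight_isShuffleDescent_insert {S : Finset ℕ} {N a : ℕ} (h : N < a) :
    descWeight (IsShuffleDescent δ₁ δ₂ (insert a S)) N =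
      descWeight (IsShuffleDescent δ₁ δ₂ S) N := by
  refine descWeight_congr fun i _ hi => ?_
  simp only [IsShuffleDescent, mem_insert, rank_insert_of_lt (show i < a by omega),
    show i + 1 ≠ a by omega, show i ≠ a by omega, false_or]

lemma descWeight_isShuffleDescent_succ_of_subset {S : Finset ℕ} {N : ℕ} (hS : S ⊆ Icc 1 N) :
    descWeight (IsShuffleDescent δ₁ δ₂ S) (N + 2) =
      descWeight (IsShuffleDescent δ₁ δ₂ S) (N + 1) + if δ₂ (N + 1 - #S) then N + 1 else 0 := by
  have hout : ∀ x, N < x → x ∉ S := fun x hx hxS => by have := mem_Icc.mp (hS hxS); omega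
  rw [descWeight_succ]
  congr 2
  simp [IsShuffleDescent, hout (N + 1 + 1) (by omega), hout (N + 1) (by omega),
    rank_eq_card hS (by omega : N ≤ N + 1)]

lemma descWeight_isShuffleDescent_insert_self {S : Finset ℕ} {N : ℕ} (hS : S ⊆ Icc 1 N) :
    descWeight (IsShuffleDescent δ₁ δ₂ (insert (N + 1) S)) (N + 2) =
      descWeight (IsShuffleDescent δ₁ δ₂ (insert (N + 1) S)) (N + 1) := by
  have hout : N + 2 ∉ S := fun h => by have := mem_Icc.mp (hS h); omega
  rw [descWeight_succ]
  simp [IsShuffleDescent, hout]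

lemma descWeight_isShuffleDescent_insert_succ {S : Finset ℕ} {N : ℕ} (hS : S ⊆ Icc 1 (N + 1)) :
    descWeight (IsShuffleDescent δ₁ δ₂ (insert (N + 2) S)) (N + 2) =
      descWeight (IsShuffleDescent δ₁ δ₂ S) (N + 1) +
        if N + 1 ∈ S → δ₁ #S then N + 1 else 0 := by
  rw [descWeight_succ, descWeight_isShuffleDescent_insert (by omega)]
  congr 2
  simp [IsShuffleDescent, rank_insert_of_lt (show N + 1 < N + 2 by omega),
    rank_eq_card hS le_rfl]

end ShuffleDescent

section ShuffleSum

variable {R : Type*} [CommSemiring R] (q : R)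
variable (δ₁ δ₂ : ℕ → Prop) [DecidablePred δ₁] [DecidablePred δ₂]

/-- The part of the sum over the `k`-subsets of `{1, …, N + 1}` coming from those avoiding
`N + 1`. -/
def sumWithoutTop (N k : ℕ) : R :=
  ∑ S ∈ powersetCard k (Icc 1 N), q ^ descWeight (IsShuffleDescent δ₁ δ₂ S) (N + 1)

/-- The part of the sum over the `k + 1`-subsets of `{1, …, N + 1}` coming from those containing
`N + 1`. -/
def sumWithTop (N k : ℕ) : R :=
  ∑ S ∈ powersetCard k (Icc 1 N), q ^ descWeight (IsShuffleDescent δ₁ δ₂ (insert (N + 1) S)) (N + 1)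

lemma sumWithoutTop_succ_zero (N : ℕ) :
    sumWithoutTop q δ₁ δ₂ (N + 1) 0 =
      q ^ (if δ₂ (N + 1) then N + 1 else 0) * sumWithoutTop q δ₁ δ₂ N 0 := by
  rw [sumWithoutTop, sumWithoutTop, powersetCard_zero, powersetCard_zero, sum_singleton,
    sum_singleton, descWeight_isShuffleDescent_succ_of_subset (empty_subset _), card_empty,
    Nat.sub_zero, pow_add, mul_comm]

lemma sumWithTop_succ_zero (N : ℕ) :
    sumWithTop q δ₁ δ₂ (N + 1) 0 = q ^ (N + 1) * sumWithoutTop q δ₁ δ₂ N 0 := by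
  rw [sumWithTop, sumWithoutTop, powersetCard_zero, powersetCard_zero, sum_singleton,
    sum_singleton, descWeight_isShuffleDescent_insert_succ (empty_subset _), if_pos (by simp),
    pow_add, mul_comm]

lemma sumWithoutTop_succ_succ (N k : ℕ) :
    sumWithoutTop q δ₁ δ₂ (N + 1) (k + 1) =
      q ^ (if δ₂ (N - k) then N + 1 else 0) * sumWithoutTop q δ₁ δ₂ N (k + 1) +
        sumWithTop q δ₁ δ₂ N k := by
  have hsub : ∀ {j} {S : Finset ℕ}, S ∈ powersetCard j (Icc 1 N) → S ⊆ Icc 1 N := fun h =>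
    (mem_powersetCard.mp h).1
  rw [sumWithoutTop, sum_powersetCard_Icc_succ, sumWithoutTop, mul_sum, sumWithTop]
  congr 1 <;> refine sum_congr rfl fun S hS => ?_
  · rw [descWeight_isShuffleDescent_succ_of_subset (hsub hS), (mem_powersetCard.mp hS).2, pow_add,
      mul_comm, Nat.add_sub_add_right]
  · rw [descWeight_isShuffleDescent_insert_self (hsub hS)]

lemma sumWithTop_succ_succ (N k : ℕ) :
    sumWithTop q δ₁ δ₂ (N + 1) (k + 1) =
      q ^ (N + 1) * sumWithoutTop q δ₁ δ₂ N (k + 1) +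
        q ^ (if δ₁ (k + 1) then N + 1 else 0) * sumWithTop q δ₁ δ₂ N k := by
  have hsub : ∀ {j} {S : Finset ℕ}, S ∈ powersetCard j (Icc 1 N) → S ⊆ Icc 1 N := fun h =>
    (mem_powersetCard.mp h).1
  rw [sumWithTop, sum_congr rfl fun S hS => by
    rw [descWeight_isShuffleDescent_insert_succ (mem_powersetCard.mp hS).1,
      (mem_powersetCard.mp hS).2], sum_powersetCard_Icc_succ, sumWithoutTop, sumWithTop,
    mul_sum, mul_sum]
  congr 1 <;> refine sum_congr rfl fun S hS => ?_
  · rw [if_pos fun h => absurd (hsub hS h) (by simp), pow_add, mul_comm]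
  · simp only [mem_insert_self, true_imp_iff, pow_add, mul_comm]

lemma sumWithoutTop_eq_and_sumWithTop_eq (N k : ℕ) :
    sumWithoutTop q δ₁ δ₂ N k =
        q ^ (descWeight δ₁ k + descWeight δ₂ (N + 1 - k)) * qBinomial q N k ∧
      sumWithTop q δ₁ δ₂ N k =
        q ^ (descWeight δ₁ (k + 1) + descWeight δ₂ (N - k) + (N - k)) * qBinomial q N k := by
  induction N generalizing k with
  | zero => rcases k with _ | k <;> simp [sumWithoutTop, sumWithTop, qBinomial_eq_zero_of_lt]
  | succ N ih =>
    rcases k with _ | k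
    · rw [sumWithoutTop_succ_zero, sumWithTop_succ_zero, (ih 0).1]
      simp [descWeight_succ δ₂ (N + 1), pow_add, mul_comm, mul_left_comm]
    rw [sumWithoutTop_succ_succ, sumWithTop_succ_succ, (ih (k + 1)).1, (ih k).2]
    rcases lt_or_ge N k with hNk | hkN
    · simp [qBinomial_eq_zero_of_lt q hNk, qBinomial_eq_zero_of_lt q (show N < k + 1 by omega),
        qBinomial_eq_zero_of_lt q (show N + 1 < k + 1 by omega)]
    obtain ⟨d, rfl⟩ := Nat.exists_eq_add_of_le hkN
    simp only [show k + d + 1 - (k + 1) = d by omega, show k + d + 1 + 1 - (k + 1) = d + 1 by omega,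
      show k + d - k = d by omega, descWeight_succ δ₂ d, descWeight_succ δ₁ (k + 1)]
    constructor
    · split_ifs
      · rw [qBinomial_succ_succ]; ring
      · rw [qBinomial_succ_succ', show k + d - k = d by omega]; ring
    · split_ifs
      · rw [qBinomial_succ_succ', show k + d - k = d by omega]; ring
      · rw [qBinomial_succ_succ]; ring

theorem sum_powersetCard_pow_descWeight_isShuffleDescent (N k : ℕ) :
    ∑ S ∈ powersetCard k (Icc 1 N), q ^ descWeight (IsShuffleDescent δ₁ δ₂ S) N =
      q ^ (descWeight δ₁ k + descWeight δ₂ (N - k)) * qBinomial q N k := by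
  rcases N with _ | N
  · rcases k with _ | k <;> simp [qBinomial_eq_zero_of_lt]
  rcases k with _ | k
  · simpa [sumWithoutTop] using (sumWithoutTop_eq_and_sumWithTop_eq q δ₁ δ₂ N 0).1
  rw [sum_powersetCard_Icc_succ, ← sumWithoutTop, ← sumWithTop,
    (sumWithoutTop_eq_and_sumWithTop_eq q δ₁ δ₂ N (k + 1)).1,
    (sumWithoutTop_eq_and_sumWithTop_eq q δ₁ δ₂ N k).2, qBinomial_succ_succ', Nat.add_sub_add_right]
  ring

end ShuffleSum

section Words

lemma mem_permWords {n : ℕ} {w : List ℕ} : w ∈ permWords n ↔ w.Nodup ∧ w.toFinset = Icc 1 n := by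
  have hIcc : (List.range' 1 n).toFinset = Icc 1 n := by
    ext; simp only [List.mem_toFinset, List.mem_range'_1, mem_Icc]; omega
  rw [permWords, List.mem_toFinset, List.mem_permutations, ← hIcc]
  exact ⟨fun h => ⟨h.nodup_iff.mpr List.nodup_range', List.toFinset_eq_of_perm _ _ h⟩,
    fun h => List.perm_of_nodup_nodup_toFinset_eq h.1 List.nodup_range' h.2⟩

lemma length_of_mem_permWords {n : ℕ} {w : List ℕ} (hw : w ∈ permWords n) : w.length = n := by
  obtain ⟨hnd, hset⟩ := mem_permWords.mp hw
  rw [← List.toFinset_card_of_nodup hnd, hset, Nat.card_Icc, Nat.add_sub_cancel]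

lemma mem_iff_of_mem_permWords {n i : ℕ} {w : List ℕ} (hw : w ∈ permWords n) :
    i ∈ w ↔ i ∈ Icc 1 n := by
  rw [← List.mem_toFinset, (mem_permWords.mp hw).2]

lemma stdWord_eq_map_rank {u : List ℕ} (hu : u.Nodup) : stdWord u = u.map (rank u.toFinset) := by
  refine List.map_congr_left fun a ha => ?_
  rw [rank_eq_card_lt_add_one (List.mem_toFinset.mpr ha),
    ← List.toFinset_card_of_nodup (hu.filter _), List.toFinset_filter]
  simp

lemma idxOf_stdWord {u : List ℕ} (hu : u.Nodup) {x : ℕ} (hx : x ∈ u) :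
    (stdWord u).idxOf (rank u.toFinset x) = u.idxOf x := by
  rw [stdWord_eq_map_rank hu]
  exact List.idxOf_map_of_injOn fun y hy h =>
    rank_injOn (List.mem_toFinset.mpr hy) (List.mem_toFinset.mpr hx) h

end Words

section InvDescent

def IsInvDescent (w : List ℕ) (i : ℕ) : Prop := w.idxOf (i + 1) < w.idxOf i

instance (w : List ℕ) : DecidablePred (IsInvDescent w) := fun _ =>
  inferInstanceAs (Decidable (_ < _))

lemma imajWord_eq_descWeight (w : List ℕ) :
    imajWord w = descWeight (IsInvDescent w) (w.length + 1) := by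
  rw [descWeight, sum_range_succ', ite_self, add_zero]
  rfl

lemma imajWord_eq_descWeight_of_mem_permWords {n : ℕ} {w : List ℕ} (hw : w ∈ permWords n) :
    imajWord w = descWeight (IsInvDescent w) n := by
  have hlast : n + 1 ∉ w := fun h => by simp [mem_iff_of_mem_permWords hw] at h
  rw [imajWord_eq_descWeight, length_of_mem_permWords hw, descWeight_succ, if_neg, add_zero]
  rw [IsInvDescent, List.idxOf_eq_length_iff.mpr hlast, not_lt]
  exact List.idxOf_le_length

lemma isInvDescent_append_iff {u v : List ℕ} {N i : ℕ} (h : u ++ v ∈ permWords N) (hi : 0 < i)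
    (hiN : i < N) :
    IsInvDescent (u ++ v) i ↔
      IsShuffleDescent (IsInvDescent (stdWord u)) (IsInvDescent (stdWord v)) u.toFinset i := by
  obtain ⟨hnd, hset⟩ := mem_permWords.mp h
  obtain ⟨hu, hv, huv⟩ := List.nodup_append.mp hnd
  have hmem : ∀ x, 1 ≤ x → x ≤ N → x ∉ u → x ∈ v := fun x h1 h2 => by
    have : x ∈ (u ++ v).toFinset := hset ▸ mem_Icc.mpr ⟨h1, h2⟩
    rw [List.mem_toFinset, List.mem_append] at this
    exact this.resolve_left
  have hposu : ∀ x ∈ u, (u ++ v).idxOf x = (stdWord u).idxOf (rank u.toFinset x) := fun x hx => by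
    rw [List.idxOf_append_of_mem hx, idxOf_stdWord hu hx]
  have hposv : ∀ x ∈ v, (u ++ v).idxOf x = u.length + (stdWord v).idxOf (rank v.toFinset x) :=
    fun x hx => by
      rw [List.idxOf_append_of_notMem fun hxu => huv x hxu x hx rfl, idxOf_stdWord hv hx]
  have hlt : ∀ x ∈ u, (u ++ v).idxOf x < u.length := fun x hx => by
    rw [List.idxOf_append_of_mem hx]; exact List.idxOf_lt_length_of_mem hx
  have hrank : rank u.toFinset i + rank v.toFinset i = i := by
    rw [← rank_union, ← List.toFinset_append, hset, rank_Icc_one hiN.le]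
    exact List.disjoint_toFinset_iff_disjoint.mpr fun x hxu hxv => huv x hxu x hxv rfl
  simp only [IsShuffleDescent, IsInvDescent, List.mem_toFinset]
  by_cases h1 : i + 1 ∈ u <;> by_cases h0 : i ∈ u
  · rw [if_pos h1, hposu _ h1, hposu _ h0, rank_succ, if_pos (List.mem_toFinset.mpr h1)]
    simp [h0]
  · have := hposv i (hmem i hi hiN.le h0)
    simp only [if_pos h1, h0, false_imp_iff, iff_true]
    linarith [hlt _ h1]
  · have := hposv (i + 1) (hmem (i + 1) (by omega) hiN h1)
    simp only [if_neg h1, h0, not_true, false_and, iff_false, not_lt]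
    linarith [hlt _ h0]
  · have h1v := hmem (i + 1) (by omega) hiN h1
    rw [if_neg h1, hposv _ h1v, hposv _ (hmem i hi hiN.le h0), rank_succ,
      if_pos (List.mem_toFinset.mpr h1v), show rank v.toFinset i = i - rank u.toFinset i by omega]
    simp [h0]

end InvDescent

section Unrank

variable {S : Finset ℕ} {σ : List ℕ}

lemma eq_map_unrank_of_stdWord_eq {u : List ℕ} (hu : u.Nodup) (h : stdWord u = σ) :
    u = σ.map (unrank u.toFinset) := by
  rw [← h, stdWord_eq_map_rank hu, List.map_map]
  conv_lhs => rw [← List.map_id u]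
  exact List.map_congr_left fun x hx => (unrank_rank (List.mem_toFinset.mpr hx)).symm

variable (hσ : σ ∈ permWords #S)
include hσ

lemma nodup_map_unrank : (σ.map (unrank S)).Nodup :=
  (mem_permWords.mp hσ).1.map_on fun x hx y hy h => by
    rw [← rank_unrank ((mem_iff_of_mem_permWords hσ).mp hx), h,
      rank_unrank ((mem_iff_of_mem_permWords hσ).mp hy)]

lemma toFinset_map_unrank : (σ.map (unrank S)).toFinset = S := by
  ext x
  simp only [List.mem_toFinset, List.mem_map]
  refine ⟨fun ⟨r, hr, hx⟩ => hx ▸ unrank_mem ((mem_iff_of_mem_permWords hσ).mp hr), fun hx => ?_⟩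
  refine ⟨rank S x, ?_, unrank_rank hx⟩
  rw [← List.mem_toFinset, (mem_permWords.mp hσ).2, ← image_rank]
  exact mem_image_of_mem _ hx

lemma stdWord_map_unrank : stdWord (σ.map (unrank S)) = σ := by
  rw [stdWord_eq_map_rank (nodup_map_unrank hσ), toFinset_map_unrank hσ, List.map_map]
  conv_rhs => rw [← List.map_id σ]
  exact List.map_congr_left fun r hr => rank_unrank ((mem_iff_of_mem_permWords hσ).mp hr)

end Unrank

section Shuffle

variable {N a : ℕ} {θ : List ℕ}

lemma toFinset_take_mem_powersetCard (hθ : θ ∈ permWords N) (ha : a ≤ N) :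
    (θ.take a).toFinset ∈ powersetCard a (Icc 1 N) := by
  obtain ⟨hnd, hset⟩ := mem_permWords.mp hθ
  refine mem_powersetCard.mpr ⟨hset ▸ fun x hx =>
    List.mem_toFinset.mpr (List.mem_of_mem_take (List.mem_toFinset.mp hx)), ?_⟩
  rw [List.toFinset_card_of_nodup ((List.take_sublist _ _).nodup hnd),
    List.length_take_of_le (length_of_mem_permWords hθ ▸ ha)]

lemma toFinset_drop (hθ : θ ∈ permWords N) :
    (θ.drop a).toFinset = Icc 1 N \ (θ.take a).toFinset := by
  obtain ⟨hnd, hset⟩ := mem_permWords.mp hθ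
  rw [← List.take_append_drop a θ] at hnd hset
  rw [← hset, List.toFinset_append, union_sdiff_left, sdiff_eq_self_of_disjoint]
  exact List.disjoint_toFinset_iff_disjoint.mpr fun x hx hx' =>
    (List.nodup_append.mp hnd).2.2 x hx' x hx rfl

lemma imajWord_eq_descWeight_isShuffleDescent (hθ : θ ∈ permWords N) :
    imajWord θ = descWeight (IsShuffleDescent (IsInvDescent (stdWord (θ.take a)))
      (IsInvDescent (stdWord (θ.drop a))) (θ.take a).toFinset) N := by
  rw [imajWord_eq_descWeight_of_mem_permWords hθ]
  refine descWeight_congr fun i hi hiN => ?_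
  rw [← isInvDescent_append_iff ((List.take_append_drop a θ).symm ▸ hθ) hi hiN,
    List.take_append_drop]

end Shuffle

section ShuffleBijection

variable {a b : ℕ} {σ π : List ℕ} (hσ : σ ∈ permWords a) (hπ : π ∈ permWords b)
include hσ hπ

lemma mem_permWords_card {S : Finset ℕ} (hS : S ∈ powersetCard a (Icc 1 (a + b))) :
    σ ∈ permWords #S ∧ π ∈ permWords #(Icc 1 (a + b) \ S) := by
  obtain ⟨hsub, hS⟩ := mem_powersetCard.mp hS
  rw [card_sdiff_of_subset hsub, hS, Nat.card_Icc, show a + b + 1 - 1 - a = b by omega]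
  exact ⟨hσ, hπ⟩

lemma append_map_unrank_mem_filter {S : Finset ℕ} (hS : S ∈ powersetCard a (Icc 1 (a + b))) :
    σ.map (unrank S) ++ π.map (unrank (Icc 1 (a + b) \ S)) ∈
      (permWords (a + b)).filter (fun θ => stdWord (θ.take a) = σ ∧ stdWord (θ.drop a) = π) := by
  obtain ⟨hσS, hπS⟩ := mem_permWords_card hσ hπ hS
  have hdisj : ∀ x ∈ σ.map (unrank S), ∀ y ∈ π.map (unrank (Icc 1 (a + b) \ S)), x ≠ y := by
    rintro x hx _ hy rfl
    rw [← List.mem_toFinset, toFinset_map_unrank hπS] at hy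
    rw [← List.mem_toFinset, toFinset_map_unrank hσS] at hx
    exact (mem_sdiff.mp hy).2 hx
  have hlen : (σ.map (unrank S)).length = a := by simp [length_of_mem_permWords hσ]
  refine mem_filter.mpr ⟨mem_permWords.mpr ⟨List.nodup_append.mpr
    ⟨nodup_map_unrank hσS, nodup_map_unrank hπS, hdisj⟩, ?_⟩, ?_⟩
  · rw [List.toFinset_append, toFinset_map_unrank hσS, toFinset_map_unrank hπS,
      union_sdiff_of_subset (mem_powersetCard.mp hS).1]
  · rw [List.take_left' hlen, List.drop_left' hlen]
    exact ⟨stdWord_map_unrank hσS, stdWord_map_unrank hπS⟩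

theorem sum_filter_stdWord_eq_sum_powersetCard {M : Type*} [AddCommMonoid M] (f : ℕ → M) :
    ∑ θ ∈ (permWords (a + b)).filter (fun θ => stdWord (θ.take a) = σ ∧ stdWord (θ.drop a) = π),
        f (imajWord θ) =
      ∑ S ∈ powersetCard a (Icc 1 (a + b)),
        f (descWeight (IsShuffleDescent (IsInvDescent σ) (IsInvDescent π) S) (a + b)) := by
  refine sum_nbij' (fun θ => (θ.take a).toFinset)
    (fun S => σ.map (unrank S) ++ π.map (unrank (Icc 1 (a + b) \ S)))
    (fun θ hθ => toFinset_take_mem_powersetCard (mem_filter.mp hθ).1 (by omega))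
    (fun S hS => append_map_unrank_mem_filter hσ hπ hS) ?_ ?_ ?_
  · intro θ hθ
    obtain ⟨hθ, hu, hv⟩ := mem_filter.mp hθ
    have hnd := (mem_permWords.mp hθ).1
    rw [← toFinset_drop hθ]
    conv_rhs => rw [← List.take_append_drop a θ,
      eq_map_unrank_of_stdWord_eq ((List.take_sublist _ _).nodup hnd) hu,
      eq_map_unrank_of_stdWord_eq ((List.drop_sublist _ _).nodup hnd) hv]
  · intro S hS
    rw [List.take_left' (by simp [length_of_mem_permWords hσ]),
      toFinset_map_unrank (mem_permWords_card hσ hπ hS).1]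
  · intro θ hθ
    obtain ⟨hθ, hu, hv⟩ := mem_filter.mp hθ
    rw [imajWord_eq_descWeight_isShuffleDescent hθ, hu, hv]

theorem sum_pow_imajWord_filter_stdWord {R : Type*} [CommSemiring R] (q : R) :
    ∑ θ ∈ (permWords (a + b)).filter (fun θ => stdWord (θ.take a) = σ ∧ stdWord (θ.drop a) = π),
        q ^ imajWord θ =
      q ^ (imajWord σ + imajWord π) * qBinomial q (a + b) a := by
  rw [sum_filter_stdWord_eq_sum_powersetCard hσ hπ (q ^ ·),
    sum_powersetCard_pow_descWeight_isShuffleDescent, Nat.add_sub_cancel_left,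
    imajWord_eq_descWeight_of_mem_permWords hσ, imajWord_eq_descWeight_of_mem_permWords hπ]

end ShuffleBijection

lemma append_succ_mem_permWords {m : ℕ} {τ : List ℕ} (hτ : τ ∈ permWords m) :
    τ ++ [m + 1] ∈ permWords (m + 1) := by
  obtain ⟨hnd, hset⟩ := mem_permWords.mp hτ
  have hnot : m + 1 ∉ τ := fun h => by simp [mem_iff_of_mem_permWords hτ] at h
  refine mem_permWords.mpr ⟨hnd.append (List.nodup_singleton _) (by simpa using hnot), ?_⟩
  rw [List.toFinset_append, hset, ← insert_Icc_right_eq_Icc_add_one (by omega)]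
  simp

lemma imajWord_append_succ {m : ℕ} {τ : List ℕ} (hτ : τ ∈ permWords m) :
    imajWord (τ ++ [m + 1]) = imajWord τ := by
  have hmem : ∀ i, 1 ≤ i → i ≤ m → i ∈ τ := fun i h1 h2 =>
    (mem_iff_of_mem_permWords hτ).mpr (mem_Icc.mpr ⟨h1, h2⟩)
  have hnot : m + 1 ∉ τ := fun h => by simp [mem_iff_of_mem_permWords hτ] at h
  rw [imajWord_eq_descWeight_of_mem_permWords (append_succ_mem_permWords hτ),
    imajWord_eq_descWeight_of_mem_permWords hτ, descWeight_succ]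
  have hlast : ¬ IsInvDescent (τ ++ [m + 1]) m ∨ m = 0 := by
    rcases m.eq_zero_or_pos with rfl | hm
    · exact Or.inr rfl
    refine Or.inl (not_lt.mpr ?_)
    rw [List.idxOf_append_of_mem (hmem m hm le_rfl), List.idxOf_append_of_notMem hnot,
      List.idxOf_cons_self, add_zero]
    exact List.idxOf_le_length
  have hcongr : descWeight (IsInvDescent (τ ++ [m + 1])) m = descWeight (IsInvDescent τ) m :=
    descWeight_congr fun i hi him => by
      rw [IsInvDescent, IsInvDescent, List.idxOf_append_of_mem (hmem i hi him.le),
        List.idxOf_append_of_mem (hmem (i + 1) (by omega) him)]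
  rcases hlast with h | rfl
  · rw [if_neg h, add_zero, hcongr]
  · simp

end IMajShuffle

open IMajShuffle

/-- For `τ ∈ S_m` and `π ∈ S_n` (as permutation words), the sum of
`q^{imajWord(θ)}` over all `θ = uv ∈ S_{m+n+1}` with `u` the first `m+1` letters and `v` the
last `n` letters, `std(u) = ∫τ = τ·(m+1)` and `std(v) = π`, equals
`q^{imajWord(τ)+imajWord(π)} C(m+n+1, m+1)_q`. -/
theorem stmt16 (m n : ℕ) (τ π : List ℕ) (hτ : τ ∈ permWords m) (hπ : π ∈ permWords n) :
    (∑ w ∈ (permWords (m + n + 1)).filter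
        (fun w => stdWord (w.take (m + 1)) = τ ++ [m + 1] ∧ stdWord (w.drop (m + 1)) = π),
      (RatFunc.X : RatFunc ℚ) ^ imajWord w) =
      (RatFunc.X : RatFunc ℚ) ^ (imajWord τ + imajWord π) * gaussBinom (m + n + 1) (m + 1) := by
  rw [show m + n + 1 = m + 1 + n by omega,
    sum_pow_imajWord_filter_stdWord (append_succ_mem_permWords hτ) hπ, imajWord_append_succ hτ,
    gaussBinom_eq_qBinomial (by omega)]
end
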